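/- arXiv:1703.07093 — 9 statements merged into one kernel-verified Lean document; each statement's English description precedes it below -/
import Mathlib

section
/- Unique readability of circular words: let u_0,…,u_{k−1}, v_0,…,v_{k−1}, w_0,…,w_{k−1} be words over Σ∪{b,e}, each of length q, where 0 < p < q, gcd(p,q)=1, k ≥ 1, l > 1 and q < l/2. Put u = C(u_0,…,u_{k−1}), v = C(v_0,…,v_{k−1}), w = C(w_0,…,w_{k−1}). If the concatenation uv can be written as αwβ for words α, β over Σ∪{b,e}, then either α is the empty word (and u = w, v = β) or β is the empty word (and u = α, v = w). -/
/-!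
STATEMENT 0: Unique readability of circular words.

The circular operator: `C(w_0,…,w_{k−1}) = ∏_{i=0}^{q−1} ∏_{j=0}^{k−1} b^{q−j_i} (w_j)^{l−1} e^{j_i}`,
where `j_i` is the unique integer with `0 ≤ j_i < q` and `p·j_i ≡ i (mod q)`.
-/

namespace Stmt0

/-- The circular operator `C` with parameters `q, k, l` and index function `j` (where
`j i` plays the role of `j_i`), applied to the words `w 0, …, w (k-1)`. -/
def Cop {A : Type*} (b e : A) (q k l : ℕ) (j : ℕ → ℕ) (w : ℕ → List A) : List A :=
  (List.range q).flatMap fun i =>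
    (List.range k).flatMap fun t =>
      List.replicate (q - j i) b ++ (List.replicate (l - 1) (w t)).flatten ++
        List.replicate (j i) e


section ListAux
variable {A : Type*}

lemma getD_replicate' (n i : ℕ) (a d : A) (h : i < n) :
    (List.replicate n a).getD i d = a := by
  simp [List.getD_eq_getElem?_getD, List.getElem?_replicate, h]

lemma len_flat_rep (n : ℕ) (y : List A) :
    (List.replicate n y).flatten.length = n * y.length := by
  induction n with
  | zero => simp
  | succ n ih => simp [List.replicate_succ, ih, Nat.succ_mul, Nat.add_comm]

lemma getD_flat_rep (bb : A) (q : ℕ) (hq : 0 < q) (y : List A) (hy : y.length = q) :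
    ∀ n, ∀ i, i < n * q → (List.replicate n y).flatten.getD i bb = y.getD (i % q) bb := by
  intro n
  induction n with
  | zero => intro i h; omega
  | succ n ih =>
    intro i h
    rw [List.replicate_succ, List.flatten_cons]
    by_cases hi : i < q
    · rw [List.getD_append _ _ _ _ (by omega), Nat.mod_eq_of_lt hi]
    · rw [List.getD_append_right _ _ _ _ (by omega)]
      have h2 : i - y.length < n * q := by
        have : (n+1) * q = n * q + q := by ring
        omega
      rw [ih _ h2]
      congr 1
      have h3 : i = (i - y.length) + q := by omega
      conv_rhs => rw [h3, Nat.add_mod_right]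

lemma len_flatMap_range (F : ℕ → List A) (c B : ℕ) (h : ∀ i < c, (F i).length = B) :
    ((List.range c).flatMap F).length = c * B := by
  induction c with
  | zero => simp
  | succ c ih =>
    rw [List.range_succ, List.flatMap_append]
    simp only [List.length_append, List.flatMap_cons, List.flatMap_nil, List.append_nil]
    rw [ih (fun i hi => h i (by omega)), h c (by omega)]
    ring

lemma getD_flatMap_range (bb : A) (F : ℕ → List A) (B : ℕ) (hB : 0 < B) :
    ∀ c, (∀ i < c, (F i).length = B) → ∀ n, n < c * B →
      ((List.range c).flatMap F).getD n bb = (F (n / B)).getD (n % B) bb := by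
  intro c
  induction c with
  | zero => intro _ n hn; omega
  | succ c ih =>
    intro h n hn
    rw [List.range_succ, List.flatMap_append]
    simp only [List.flatMap_cons, List.flatMap_nil, List.append_nil]
    have hlen := len_flatMap_range F c B (fun i hi => h i (by omega))
    by_cases h1 : n < c * B
    · rw [List.getD_append _ _ _ _ (by omega)]
      exact ih (fun i hi => h i (by omega)) n h1
    · rw [List.getD_append_right _ _ _ _ (by omega)]
      have hd : n / B = c := by
        apply Nat.div_eq_of_lt_le (by omega)
        have : (c + 1) * B = c * B + B := by ring
        omega
      have hm : n % B = n - c * B := by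
        have h2 := Nat.div_add_mod n B
        rw [hd, Nat.mul_comm B c] at h2
        omega
      rw [hd, hm, hlen]
end ListAux


section Core
variable {A : Type*}

/-- q-periodic content function of a word. -/
def cw (q : ℕ) (bb : A) (y : List A) : ℕ → A := fun x => y.getD (x % q) bb

/-- ideal letter of a block `b^(q-g) y^(l-1) e^g` (P = q*l). -/
def blkF (bb ee : A) (q P g : ℕ) (φ : ℕ → A) (s : ℕ) : A :=
  if s < q - g then bb else if P - g ≤ s then ee else φ (s + g)

def blockEq (bb ee : A) (q P f g g' r : ℕ) (φ ψ ψ' : ℕ → A) : Prop :=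
  ∀ s < P, (if r + s < P then blkF bb ee q P g ψ (r + s)
            else blkF bb ee q P g' ψ' (r + s - P)) = blkF bb ee q P f φ s

lemma cw_periodic (q : ℕ) (bb : A) (y : List A) :
    ∀ x x', x % q = x' % q → cw q bb y x = cw q bb y x' := by
  intro x x' h; unfold cw; rw [h]

lemma exists_cong (q Aa x : ℕ) (hq : 0 < q) :
    ∃ s, Aa ≤ s ∧ s < Aa + q ∧ s % q = x % q := by
  obtain ⟨D, u, hu, hA⟩ : ∃ D u, u < q ∧ Aa = q * D + u :=
    ⟨Aa / q, Aa % q, Nat.mod_lt _ hq, (Nat.div_add_mod Aa q).symm⟩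
  refine ⟨Aa + (x + q - u) % q, Nat.le_add_right _ _, by have := Nat.mod_lt (x + q - u) hq; omega, ?_⟩
  calc (Aa + (x + q - u) % q) % q = (q * D + (u + (x + q - u) % q)) % q := by rw [hA, Nat.add_assoc]
    _ = (u + (x + q - u) % q) % q := Nat.mul_add_mod _ _ _
    _ = (u + (x + q - u)) % q := by
        rw [Nat.add_mod u ((x + q - u) % q), Nat.mod_mod_of_dvd _ (dvd_refl q), ← Nat.add_mod]
    _ = (x + q) % q := by congr 1; omega
    _ = x % q := Nat.add_mod_right x q

lemma block_getD (bb ee : A) (q l g : ℕ) (hq : 0 < q) (hl : 1 ≤ l) (hg : g ≤ q)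
    (y : List A) (hy : y.length = q) :
    (List.replicate (q - g) bb ++ (List.replicate (l - 1) y).flatten
      ++ List.replicate g ee).length = q * l ∧
    ∀ s, s < q * l →
      (List.replicate (q - g) bb ++ (List.replicate (l - 1) y).flatten
        ++ List.replicate g ee).getD s bb = blkF bb ee q (q * l) g (cw q bb y) s := by
  have hql : q * l = q * (l - 1) + q := by
    have h1 : l - 1 + 1 = l := by omega
    calc q * l = q * ((l - 1) + 1) := by rw [h1]
      _ = q * (l - 1) + q := by ring
  have hflen : (List.replicate (l - 1) y).flatten.length = (l - 1) * q := by
    rw [len_flat_rep, hy]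
  have hlen1 : (List.replicate (q - g) bb ++ (List.replicate (l - 1) y).flatten).length
      = q * l - g := by
    simp only [List.length_append, List.length_replicate, hflen]
    have : (l - 1) * q = q * (l - 1) := by ring
    omega
  constructor
  · simp only [List.length_append, List.length_replicate, hflen]
    have : (l - 1) * q = q * (l - 1) := by ring
    omega
  · intro s hs
    by_cases h1 : s < q - g
    · rw [List.getD_append _ _ _ _ (by omega : s < (List.replicate (q - g) bb ++ (List.replicate (l - 1) y).flatten).length)]
      rw [List.getD_append _ _ _ _ (by simp only [List.length_replicate]; omega)]
      rw [getD_replicate' _ _ _ _ (by omega)]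
      unfold blkF
      rw [if_pos h1]
    · by_cases h2 : s < q * l - g
      · rw [List.getD_append _ _ _ _ (by omega)]
        rw [List.getD_append_right _ _ _ _ (by simp only [List.length_replicate]; omega)]
        simp only [List.length_replicate]
        rw [getD_flat_rep bb q hq y hy _ _ (by
          have : (l - 1) * q = q * (l - 1) := by ring
          omega)]
        unfold blkF
        rw [if_neg h1, if_neg (by omega)]
        unfold cw
        congr 1
        have h3 : (s - (q - g)) + q = s + g := by omega
        conv_rhs => rw [show s + g = (s - (q - g)) + q from h3.symm, Nat.add_mod_right]
      · rw [List.getD_append_right _ _ _ _ (by omega)]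
        rw [hlen1]
        rw [getD_replicate' _ _ _ _ (by omega)]
        unfold blkF
        rw [if_neg h1, if_pos (by omega)]
end Core


lemma cop_len_getD {A : Type*} (bb ee : A) (q k l : ℕ) (hq : 0 < q) (hk : 0 < k) (hl : 1 ≤ l)
    (j : ℕ → ℕ) (hj : ∀ i < q, j i ≤ q) (ws : ℕ → List A) (hw : ∀ t < k, (ws t).length = q) :
    (Cop bb ee q k l j ws).length = (q * k) * (q * l) ∧
    ∀ n, n < (q * k) * (q * l) →
      (Cop bb ee q k l j ws).getD n bb
        = blkF bb ee q (q * l) (j (n / (q * l) / k % q)) (cw q bb (ws (n / (q * l) % k))) (n % (q * l)) := by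
  have hP0 : 0 < q * l := by positivity
  have hinlen : ∀ i < q, ((List.range k).flatMap fun t =>
      List.replicate (q - j i) bb ++ (List.replicate (l - 1) (ws t)).flatten ++
        List.replicate (j i) ee).length = k * (q * l) := by
    intro i hi
    exact len_flatMap_range _ k (q * l) (fun t ht => (block_getD bb ee q l (j i) hq hl (hj i hi) (ws t) (hw t ht)).1)
  have hlen : (Cop bb ee q k l j ws).length = (q * k) * (q * l) := by
    rw [show Cop bb ee q k l j ws = (List.range q).flatMap _ from rfl]
    rw [len_flatMap_range _ q (k * (q * l)) hinlen]
    ring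
  refine ⟨hlen, ?_⟩
  intro n hn
  have hn' : n < q * (k * (q * l)) := by
    have : q * (k * (q * l)) = (q * k) * (q * l) := by ring
    omega
  rw [show Cop bb ee q k l j ws = (List.range q).flatMap _ from rfl]
  rw [getD_flatMap_range bb _ (k * (q * l)) (by positivity) q hinlen n hn']
  have hi : n / (k * (q * l)) < q := by
    rw [Nat.div_lt_iff_lt_mul (by positivity)]
    have : q * (k * (q * l)) = (q * k) * (q * l) := by ring
    omega
  have hn2 : n % (k * (q * l)) < k * (q * l) := Nat.mod_lt _ (by positivity)
  rw [getD_flatMap_range bb _ (q * l) hP0 k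
    (fun t ht => (block_getD bb ee q l (j (n / (k * (q * l)))) hq hl (hj _ hi) (ws t) (hw t ht)).1)
    _ hn2]
  have ht : n % (k * (q * l)) / (q * l) < k := by
    rw [Nat.div_lt_iff_lt_mul hP0]; omega
  rw [(block_getD bb ee q l (j (n / (k * (q * l)))) hq hl (hj _ hi)
    (ws (n % (k * (q * l)) / (q * l))) (hw _ ht)).2 _ (Nat.mod_lt _ hP0)]
  -- now rewrite the three indices
  have e2 : n % (k * (q * l)) / (q * l) = n / (q * l) % k := by
    rw [Nat.mul_comm k (q * l), Nat.mod_mul_right_div_self]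
  have e3 : n % (k * (q * l)) % (q * l) = n % (q * l) :=
    Nat.mod_mod_of_dvd _ ⟨k, by ring⟩
  have e4 : n / (q * l) / k = n / (k * (q * l)) := by
    rw [Nat.div_div_eq_div_mul, Nat.mul_comm]
  rw [e2, e3, e4, Nat.mod_eq_of_lt hi]


lemma sum_shift (N : ℕ) (F : ℕ → ℕ) :
    ∀ a, ∑ m ∈ Finset.range N, F ((a + m) % N) = ∑ m ∈ Finset.range N, F (m % N) := by
  intro a
  induction a with
  | zero => simp
  | succ a ih =>
    rw [← ih]
    rcases Nat.eq_zero_or_pos N with h0 | hN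
    · simp [h0]
    obtain ⟨M, rfl⟩ : ∃ M, N = M + 1 := ⟨N - 1, by omega⟩
    calc ∑ m ∈ Finset.range (M + 1), F ((a + 1 + m) % (M + 1))
        = (∑ m ∈ Finset.range M, F ((a + 1 + m) % (M + 1))) + F ((a + 1 + M) % (M + 1)) :=
          Finset.sum_range_succ (fun m => F ((a + 1 + m) % (M + 1))) M
      _ = (∑ m ∈ Finset.range M, F ((a + (m + 1)) % (M + 1))) + F ((a + 0) % (M + 1)) := by
          congr 1
          · apply Finset.sum_congr rfl
            intro m _
            congr 2
            omega
          · rw [show a + 1 + M = (a + 0) + (M + 1) by omega, Nat.add_mod_right]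
      _ = ∑ m ∈ Finset.range (M + 1), F ((a + m) % (M + 1)) := (Finset.sum_range_succ' (fun m => F ((a + m) % (M + 1))) M).symm


section Facts
variable {A : Type*} (bb ee : A) (q P : ℕ)

/-- F1: left b-marker may not hit the e-region of block `g`. -/
lemma fact1 (hbe : bb ≠ ee) (hq : 2 ≤ q) (hP5 : 5 * q ≤ P)
    (f g g' r : ℕ) (hf : f < q) (hg1 : 1 ≤ g) (hr : r < P)
    (φ ψ ψ' : ℕ → A) (hE : blockEq bb ee q P f g g' r φ ψ ψ') :
    r + q + g ≤ P + f := by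
  by_contra hcon
  push_neg at hcon
  rcases le_or_gt P (r + g) with hc | hc
  · have h := hE 0 (by omega)
    rw [if_pos (by omega)] at h
    simp only [blkF] at h
    rw [if_neg (by omega), if_pos (by omega), if_pos (by omega)] at h
    exact hbe h.symm
  · have h := hE (P - g - r) (by omega)
    rw [if_pos (by omega)] at h
    simp only [blkF] at h
    rw [if_neg (by omega), if_pos (by omega), if_pos (by omega)] at h
    exact hbe h.symm

/-- F1': left e-marker may not hit the b-marker of the next block. -/
lemma fact1' (hbe : bb ≠ ee) (hq : 2 ≤ q) (hP5 : 5 * q ≤ P)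
    (f g g' r : ℕ) (hf : f < q) (hg' : g' < q) (hr : r < P)
    (φ ψ ψ' : ℕ → A) (hE : blockEq bb ee q P f g g' r φ ψ ψ')
    (hf1 : 1 ≤ f) (hr1 : 1 ≤ r) : q + f ≤ r + g' := by
  by_contra hcon
  push_neg at hcon
  rcases le_or_gt f r with hc | hc
  · have h := hE (P - f) (by omega)
    rw [if_neg (by omega)] at h
    simp only [blkF] at h
    rw [if_pos (by omega), if_neg (by omega), if_pos (by omega)] at h
    exact hbe h
  · have h := hE (P - r) (by omega)
    rw [if_neg (by omega)] at h
    simp only [blkF] at h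
    rw [if_pos (by omega), if_neg (by omega), if_pos (by omega)] at h
    exact hbe h

/-- F2: full cyclic-shift relation between `φ` and `ψ`. -/
lemma fact2 (hq : 2 ≤ q) (hP5 : 5 * q ≤ P)
    (f g g' r : ℕ) (hf : f < q) (hg : g < q) (hr : r < P)
    (φ ψ ψ' : ℕ → A)
    (hφ : ∀ x x', x % q = x' % q → φ x = φ x')
    (hψ : ∀ x x', x % q = x' % q → ψ x = ψ x')
    (hE : blockEq bb ee q P f g g' r φ ψ ψ')
    (hC : r + g + 2 * q ≤ P + f) :
    ∀ x, φ (x + f) = ψ (x + r + g) := by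
  intro x
  obtain ⟨s, hs1, hs2, hs3⟩ := exists_cong q (max (q - f) (q - g - r)) x (by omega)
  have hmax := max_choice (q - f) (q - g - r)
  have hA1 : q - f ≤ s := le_trans (le_max_left _ _) hs1
  have hA2 : q - g - r ≤ s := le_trans (le_max_right _ _) hs1
  have c2 : s < P - f := by rcases hmax with h | h <;> rw [h] at hs2 <;> omega
  have c4 : r + s < P - g := by rcases hmax with h | h <;> rw [h] at hs2 <;> omega
  have c3 : q - g ≤ r + s := by omega
  have h := hE s (by omega)
  rw [if_pos (by omega)] at h
  simp only [blkF] at h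
  rw [if_neg (by omega), if_neg (by omega), if_neg (by omega), if_neg (by omega)] at h
  -- h : ψ (r + s + g) = φ (s + f)
  have e1 : φ (x + f) = φ (s + f) := by
    apply hφ
    have hm : Nat.ModEq q x s := hs3.symm
    exact hm.add_right f
  have e2 : ψ (r + s + g) = ψ (x + r + g) := by
    apply hψ
    have hm : Nat.ModEq q s x := hs3
    have := hm.add_right (r + g)
    have h1 : s + (r + g) = r + s + g := by ring
    have h2 : x + (r + g) = x + r + g := by ring
    rw [h1, h2] at this
    exact this
  rw [e1, ← h, e2]

/-- F2': full cyclic-shift relation between `φ` and `ψ'`. -/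
lemma fact2' (hq : 2 ≤ q) (hP5 : 5 * q ≤ P) (hdvd : q ∣ P)
    (f g g' r : ℕ) (hf : f < q) (hg' : g' < q) (hr : r < P)
    (φ ψ ψ' : ℕ → A)
    (hφ : ∀ x x', x % q = x' % q → φ x = φ x')
    (hψ' : ∀ x x', x % q = x' % q → ψ' x = ψ' x')
    (hE : blockEq bb ee q P f g g' r φ ψ ψ')
    (hC : 2 * q + f ≤ r + g') :
    ∀ x, φ (x + f) = ψ' (x + r + g') := by
  intro x
  obtain ⟨s, hs1, hs2, hs3⟩ := exists_cong q (max (q - f) (P - r + (q - g'))) x (by omega)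
  have hmax := max_choice (q - f) (P - r + (q - g'))
  have hA1 : q - f ≤ s := le_trans (le_max_left _ _) hs1
  have hA2 : P - r + (q - g') ≤ s := le_trans (le_max_right _ _) hs1
  have c2 : s < P - f := by rcases hmax with h | h <;> rw [h] at hs2 <;> omega
  have c3 : P + (q - g') ≤ r + s := by omega
  have c4 : r + s - P < P - g' := by rcases hmax with h | h <;> rw [h] at hs2 <;> omega
  have h := hE s (by omega)
  rw [if_neg (by omega)] at h
  simp only [blkF] at h
  rw [if_neg (by omega), if_neg (by omega), if_neg (by omega), if_neg (by omega)] at h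
  -- h : ψ' (r + s - P + g') = φ (s + f)
  have e1 : φ (x + f) = φ (s + f) := by
    apply hφ
    have hm : Nat.ModEq q x s := hs3.symm
    exact hm.add_right f
  have e2 : ψ' (r + s - P + g') = ψ' (x + r + g') := by
    apply hψ'
    obtain ⟨c, hc⟩ := hdvd
    have h1 : (r + s - P + g') + q * c = s + (r + g') := by omega
    calc (r + s - P + g') % q = ((r + s - P + g') + q * c) % q := by
          rw [Nat.add_mul_mod_self_left]
      _ = (s + (r + g')) % q := by rw [h1]
      _ = (x + (r + g')) % q := (Nat.ModEq.add_right (r + g') (hs3 : Nat.ModEq q s x))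
      _ = (x + r + g') % q := by rw [Nat.add_assoc]
  rw [e1, ← h, e2]

/-- F3: forced b in ψ. -/
lemma fact3 (hq : 2 ≤ q) (hP5 : 5 * q ≤ P)
    (f g g' r : ℕ) (hf : f < q)
    (φ ψ ψ' : ℕ → A) (hE : blockEq bb ee q P f g g' r φ ψ ψ')
    (s : ℕ) (h1 : s < q - f) (h2 : q - g ≤ r + s) (h3 : r + s < P - g) :
    ψ (r + s + g) = bb := by
  have h := hE s (by omega)
  rw [if_pos (by omega)] at h
  simp only [blkF] at h
  rw [if_neg (by omega), if_neg (by omega), if_pos h1] at h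
  exact h

/-- F4: forced e in φ. -/
lemma fact4 (hq : 2 ≤ q) (hP5 : 5 * q ≤ P)
    (f g g' r : ℕ) (hg : g < q)
    (φ ψ ψ' : ℕ → A) (hE : blockEq bb ee q P f g g' r φ ψ ψ')
    (s : ℕ) (h1 : q - f ≤ s) (h2 : s < P - f) (h3 : P - g ≤ r + s) (h4 : r + s < P) :
    φ (s + f) = ee := by
  have h := hE s (by omega)
  rw [if_pos (by omega)] at h
  simp only [blkF] at h
  rw [if_neg (by omega), if_pos (by omega), if_neg (by omega), if_neg (by omega)] at h
  exact h.symm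

/-- F5: forced b in φ from the next block's b-marker. -/
lemma fact5 (hq : 2 ≤ q) (hP5 : 5 * q ≤ P)
    (f g g' r : ℕ)
    (φ ψ ψ' : ℕ → A) (hE : blockEq bb ee q P f g g' r φ ψ ψ')
    (s : ℕ) (h1 : q - f ≤ s) (h2 : s < P - f) (h3 : P ≤ r + s) (h4 : r + s - P < q - g') :
    φ (s + f) = bb := by
  have h := hE s (by omega)
  rw [if_neg (by omega)] at h
  simp only [blkF] at h
  rw [if_pos (by omega), if_neg (by omega), if_neg (by omega)] at h
  exact h.symm

end Facts


section Facts2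
variable {A : Type*} (bb ee : A) (q P : ℕ)

/-- Aligned case: the exponents must agree. -/
lemma fact_aligned (hbe : bb ≠ ee) (hq : 2 ≤ q) (hP5 : 5 * q ≤ P) (hdvd : q ∣ P)
    (f g g' : ℕ) (hf : f < q) (hg : g < q)
    (φ ψ ψ' : ℕ → A)
    (hφ : ∀ x x', x % q = x' % q → φ x = φ x')
    (hψ : ∀ x x', x % q = x' % q → ψ x = ψ x')
    (hE : blockEq bb ee q P f g g' 0 φ ψ ψ')
    (hfg : f < g) : False := by
  have hP0 : 0 < P := by omega
  have hb : ψ (0 + (q - g) + g) = bb :=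
    fact3 bb ee q P hq hP5 f g g' 0 hf φ ψ ψ' hE (q - g) (by omega) (by omega) (by omega)
  have hb' : ψ q = bb := by rw [show (0 + (q - g) + g) = q by omega] at hb; exact hb
  have he : φ (P - g + f) = ee :=
    fact4 bb ee q P hq hP5 f g g' 0 hg φ ψ ψ' hE (P - g) (by omega) (by omega) (by omega) (by omega)
  have hsh := fact2 bb ee q P hq hP5 f g g' 0 hf hg hP0 φ ψ ψ' hφ hψ hE (by omega) (P - g)
  -- hsh : φ (P - g + f) = ψ (P - g + 0 + g)
  have he' : ψ P = ee := by
    rw [show P - g + 0 + g = P by omega] at hsh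
    rw [← hsh, he]
  obtain ⟨c, rfl⟩ := hdvd
  have : ψ q = ψ (q * c) := by
    apply hψ
    rw [Nat.mod_self, Nat.mul_mod_right]
  rw [hb', he'] at this
  exact hbe this

/-- Middle regime: exponent of the aligned U-block is ≤ the W-block exponent. -/
lemma fact_mid (hbe : bb ≠ ee) (hq : 2 ≤ q) (hP5 : 5 * q ≤ P) (hdvd : q ∣ P)
    (f g g' r : ℕ) (hf : f < q) (hg : g < q) (hr : r < P)
    (φ ψ ψ' : ℕ → A)
    (hφ : ∀ x x', x % q = x' % q → φ x = φ x')
    (hψ : ∀ x x', x % q = x' % q → ψ x = ψ x')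
    (hE : blockEq bb ee q P f g g' r φ ψ ψ')
    (hr1 : 1 ≤ r) (hr3 : r + 3 * q ≤ P)
    (hfg : f < g) : False := by
  have hL1 : r + q + g ≤ P + f :=
    fact1 bb ee q P hbe hq hP5 f g g' r hf (by omega) hr φ ψ ψ' hE
  have hsh := fact2 bb ee q P hq hP5 f g g' r hf hg hr φ ψ ψ' hφ hψ hE (by omega)
  obtain ⟨M, v, hv, hMv⟩ : ∃ M v, v < q ∧ r + g = q * M + v :=
    ⟨(r + g) / q, (r + g) % q, Nat.mod_lt _ (by omega), (Nat.div_add_mod _ _).symm⟩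
  by_cases hAB : v = 0 ∨ f < v
  · -- case A : clash at residue 0
    obtain ⟨c, t, hc1, ht1, hct⟩ : ∃ c t, 1 ≤ c ∧ t + f < q ∧ r + t + g = q * c := by
      rcases hAB with h0 | hfv
      · have hM1 : 1 ≤ M := by
          rcases Nat.eq_zero_or_pos M with hh | hh
          · rw [hh, Nat.mul_zero] at hMv; omega
          · exact hh
        exact ⟨M, 0, hM1, by omega, by omega⟩
      · refine ⟨M + 1, q - v, by omega, by omega, ?_⟩
        have : q * (M + 1) = q * M + q := by ring
        omega
    have hqc : q ≤ q * c := Nat.le_mul_of_pos_right q (by omega)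
    have hb : ψ (r + t + g) = bb := by
      apply fact3 bb ee q P hq hP5 f g g' r hf φ ψ ψ' hE t (by omega) (by omega) (by omega)
    have he : φ (P - g - r + f) = ee := by
      apply fact4 bb ee q P hq hP5 f g g' r hg φ ψ ψ' hE (P - g - r)
        (by omega) (by omega) (by omega) (by omega)
    have he' : ψ P = ee := by
      have h2 := hsh (P - g - r)
      rw [show P - g - r + r + g = P by omega] at h2
      rw [← h2, he]
    obtain ⟨d, rfl⟩ := hdvd
    have : ψ (r + t + g) = ψ (q * d) := by
      apply hψ
      rw [hct, Nat.mul_mod_right, Nat.mul_mod_right]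
    rw [hb, he'] at this
    exact hbe this
  · -- case B : clash at residue v
    push_neg at hAB
    obtain ⟨hv1, hvf⟩ := hAB
    have hM1 : 1 ≤ M := by
      rcases Nat.eq_zero_or_pos M with h0 | h; · rw [h0, Nat.mul_zero] at hMv; omega
      · exact h
    have hqM : q ≤ q * M := Nat.le_mul_of_pos_right q (by omega)
    have hb : ψ (r + 0 + g) = bb := by
      apply fact3 bb ee q P hq hP5 f g g' r hf φ ψ ψ' hE 0 (by omega) (by omega) (by omega)
    have he : φ (P - g - r + v + f) = ee := by
      apply fact4 bb ee q P hq hP5 f g g' r hg φ ψ ψ' hE (P - g - r + v)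
        (by omega) (by omega) (by omega) (by omega)
    have he' : ψ (P + v) = ee := by
      have h2 := hsh (P - g - r + v)
      rw [show P - g - r + v + r + g = P + v by omega] at h2
      rw [← h2, he]
    obtain ⟨d, rfl⟩ := hdvd
    have : ψ (r + 0 + g) = ψ (q * d + v) := by
      apply hψ
      rw [show r + 0 + g = q * M + v by omega, Nat.mul_add_mod, Nat.mul_add_mod]
    rw [hb, he'] at this
    exact hbe this

/-- Final clash in the `a = 0` case, at the last block (g' = 0). -/
lemma fact_last (hbe : bb ≠ ee) (hq : 2 ≤ q) (hP5 : 5 * q ≤ P)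
    (f r : ℕ) (hf : f < q) (hf1 : 1 ≤ f) (hr1 : 1 ≤ r) (hrP : r + q ≤ P)
    (φ ψ ψ' : ℕ → A)
    (hφ : ∀ x x', x % q = x' % q → φ x = φ x')
    (hE : blockEq bb ee q P f f 0 r φ ψ ψ') : False := by
  rcases le_or_gt r q with hc | hc
  · have h := hE (P - 1) (by omega)
    rw [if_neg (by omega)] at h
    simp only [blkF] at h
    rw [if_pos (by omega), if_neg (by omega), if_pos (by omega)] at h
    exact hbe h
  · have he : φ (P - f - r + f) = ee := by
      apply fact4 bb ee q P hq hP5 f f 0 r hf φ ψ ψ' hE (P - f - r)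
        (by omega) (by omega) (by omega) (by omega)
    have hb : φ (P - r + q - f + f) = bb := by
      apply fact5 bb ee q P hq hP5 f f 0 r φ ψ ψ' hE (P - r + q - f)
        (by omega) (by omega) (by omega) (by omega)
    have : φ (P - f - r + f) = φ (P - r + q - f + f) := by
      apply hφ
      rw [show P - r + q - f + f = (P - f - r + f) + q by omega, Nat.add_mod_right]
    rw [he, hb] at this
    exact hbe this.symm

/-- High regime: exponents of consecutive U-blocks are non-decreasing. -/
lemma fact_high (hbe : bb ≠ ee) (hq : 2 ≤ q) (hP5 : 5 * q ≤ P) (hP6 : 6 * q ≤ P + 2) (hdvd : q ∣ P)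
    (f g g' r : ℕ) (hf : f < q) (hg : g < q) (hg' : g' < q) (hr : r < P)
    (φ ψ ψ' : ℕ → A)
    (hφ : ∀ x x', x % q = x' % q → φ x = φ x')
    (hψ' : ∀ x x', x % q = x' % q → ψ' x = ψ' x')
    (hE : blockEq bb ee q P f g g' r φ ψ ψ')
    (hrlo : P < r + 3 * q) (hrhi : r + q ≤ P)
    (hgg : g' < g) : False := by
  have hg1 : 1 ≤ g := by omega
  have hL1 : r + q + g ≤ P + f :=
    fact1 bb ee q P hbe hq hP5 f g g' r hf hg1 hr φ ψ ψ' hE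
  have hsh := fact2' bb ee q P hq hP5 hdvd f g g' r hf hg' hr φ ψ ψ' hφ hψ' hE (by omega)
  have hb : φ (P - r + q - g + f) = bb := by
    apply fact5 bb ee q P hq hP5 f g g' r φ ψ ψ' hE (P - r + q - g)
      (by omega) (by omega) (by omega) (by omega)
  have hbY : ψ' (P - r + q - g + r + g') = bb := by rw [← hsh, hb]
  have he : φ (P - g - r + f) = ee := by
    apply fact4 bb ee q P hq hP5 f g g' r hg φ ψ ψ' hE (P - g - r)
      (by omega) (by omega) (by omega) (by omega)
  have heY : ψ' (P - g - r + r + g') = ee := by rw [← hsh, he]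
  have : ψ' (P - g - r + r + g') = ψ' (P - r + q - g + r + g') := by
    apply hψ'
    rw [show P - r + q - g + r + g' = (P - g - r + r + g') + q by omega, Nat.add_mod_right]
  rw [hbY, heY] at this
  exact hbe this.symm

end Facts2

/-- Unique readability of circular words: if `u = C(u_0,…,u_{k−1})`, `v = C(v_0,…,v_{k−1})`,
`w = C(w_0,…,w_{k−1})` (all words of length `q`, with `0 < p < q`, `gcd(p,q)=1`, `k ≥ 1`,
`l > 1`, `q < l/2`) and `u ++ v = pre ++ w ++ suf`, then `pre` or `suf` is empty (and
correspondingly `w = u, suf = v` or `pre = u, w = v`). -/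
theorem unique_readability_of_circular_words
    {A : Type*} (b e : A) (hbe : b ≠ e)
    (p q k l : ℕ) (hp0 : 0 < p) (hpq : p < q) (hcop : Nat.Coprime p q)
    (hk : 1 ≤ k) (hl : 1 < l) (hql : 2 * q < l)
    (j : ℕ → ℕ) (hj : ∀ i < q, j i < q ∧ (p * j i) % q = i % q)
    (u v w : ℕ → List A)
    (hu : ∀ i < k, (u i).length = q)
    (hv : ∀ i < k, (v i).length = q)
    (hw : ∀ i < k, (w i).length = q)
    (pre suf : List A)
    (hsplit : Cop b e q k l j u ++ Cop b e q k l j v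
        = pre ++ Cop b e q k l j w ++ suf) :
    (pre = [] ∧ Cop b e q k l j w = Cop b e q k l j u ∧ suf = Cop b e q k l j v) ∨
    (suf = [] ∧ pre = Cop b e q k l j u ∧ Cop b e q k l j w = Cop b e q k l j v) := by
  classical
  have q0 : 0 < q := by omega
  have hq2 : 2 ≤ q := by omega
  have k0 : 0 < k := hk
  set P := q * l with hPdef
  have hP0 : 0 < P := Nat.mul_pos q0 (by omega)
  have hPb : q * (2 * q + 1) ≤ P := Nat.mul_le_mul_left q (by omega)
  have hP5 : 5 * q ≤ P := by nlinarith
  have hP6 : 6 * q ≤ P + 2 := by nlinarith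
  have hdvd : q ∣ P := ⟨l, hPdef⟩
  set N := q * k with hNdef
  have hN0 : 0 < N := Nat.mul_pos q0 k0
  set L := N * P with hLdef
  have hL0 : 0 < L := Nat.mul_pos hN0 hP0
  have hPN : P * N = L := by rw [hLdef]; ring
  clear_value P N L
  -- j facts
  have hjlt : ∀ i < q, j i < q := fun i hi => (hj i hi).1
  have hjmod : ∀ i < q, (p * j i) % q = i % q := fun i hi => (hj i hi).2
  have hj0 : j 0 = 0 := by
    have h1 : (p * j 0) % q = 0 := by rw [hjmod 0 q0, Nat.zero_mod]
    have h3 : q ∣ j 0 := Nat.Coprime.dvd_of_dvd_mul_left hcop.symm (Nat.dvd_of_mod_eq_zero h1)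
    exact Nat.eq_zero_of_dvd_of_lt h3 (hjlt 0 q0)
  have hjq1 : 1 ≤ j (q - 1) := by
    by_contra hcon
    have h0 : j (q - 1) = 0 := by omega
    have h2 := hjmod (q - 1) (by omega)
    rw [h0, Nat.mul_zero, Nat.zero_mod, Nat.mod_eq_of_lt (by omega)] at h2
    omega
  have hj1 : (p * j 1) % q = 1 := by
    have h2 := hjmod 1 hq2
    rwa [Nat.mod_eq_of_lt hq2] at h2
  -- the exponent function
  set E : ℕ → ℕ := fun n => j (n / k % q) with hEdef
  have hElt : ∀ n, E n < q := fun n => hjlt _ (Nat.mod_lt _ q0)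
  have hEmk : ∀ i, i < q → E (i * k) = j i := by
    intro i hi
    show j (i * k / k % q) = j i
    rw [Nat.mul_div_cancel _ k0, Nat.mod_eq_of_lt hi]
  have hEN : ∀ y, E (N + y) = E y := by
    intro y
    show j ((N + y) / k % q) = j (y / k % q)
    rw [show N + y = k * q + y by rw [hNdef]; ring, Nat.mul_add_div k0, Nat.add_mod_left]
  have hENc : ∀ c y, E (N * c + y) = E y := by
    intro c
    induction c with
    | zero => intro y; rw [Nat.mul_zero, Nat.zero_add]
    | succ c ih =>
      intro y
      rw [show N * (c + 1) + y = N + (N * c + y) by ring, hEN, ih]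
  have hEmod : ∀ n, E n = E (n % N) := by
    intro n
    conv_lhs => rw [← Nat.div_add_mod n N]
    rw [hENc]
  have hE0 : E 0 = 0 := by
    show j (0 / k % q) = 0
    rw [Nat.zero_div, Nat.zero_mod, hj0]
  have hEk : E k = j 1 := by
    show j (k / k % q) = j 1
    rw [Nat.div_self k0, Nat.mod_eq_of_lt hq2]
  have hENval : E N = 0 := by
    show j (N / k % q) = 0
    rw [hNdef, Nat.mul_div_cancel _ k0, Nat.mod_self, hj0]
  have hEm2 : E (N - 1) = j (q - 1) := by
    have hkq : k * (q - 1) + k = k * q := by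
      have h1 : (q - 1) + 1 = q := by omega
      calc k * (q - 1) + k = k * ((q - 1) + 1) := by ring
        _ = k * q := by rw [h1]
    have hNk : N = k * q := by rw [hNdef]; ring
    have h1 : N - 1 = k * (q - 1) + (k - 1) := by omega
    show j ((N - 1) / k % q) = j (q - 1)
    rw [h1, Nat.mul_add_div k0, Nat.div_eq_of_lt (by omega), Nat.add_zero,
      Nat.mod_eq_of_lt (by omega)]
  -- list lengths and letters
  obtain ⟨hlenW0, hgetW0⟩ := cop_len_getD b e q k l q0 k0 (by omega) j
    (fun i hi => le_of_lt (hjlt i hi)) w hw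
  obtain ⟨hlenU0, hgetU0⟩ := cop_len_getD b e q k l q0 k0 (by omega) j
    (fun i hi => le_of_lt (hjlt i hi)) u hu
  obtain ⟨hlenV0, hgetV0⟩ := cop_len_getD b e q k l q0 k0 (by omega) j
    (fun i hi => le_of_lt (hjlt i hi)) v hv
  have hNPL : (q * k) * (q * l) = L := by rw [hLdef, hNdef, hPdef]
  rw [hNPL] at hlenW0 hlenU0 hlenV0
  set d := pre.length with hd
  clear_value d
  have hlen2 : L + L = d + L + suf.length := by
    have h1 := congrArg List.length hsplit
    simp only [List.length_append, hlenU0, hlenV0, hlenW0] at h1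
    omega
  rcases Nat.eq_zero_or_pos d with hd0 | hdpos
  · left
    have hpre : pre = [] := List.eq_nil_of_length_eq_zero (hd ▸ hd0)
    rw [hpre, List.nil_append] at hsplit
    obtain ⟨h1, h2⟩ := List.append_inj hsplit (by rw [hlenU0, hlenW0])
    exact ⟨hpre, h1.symm, h2.symm⟩
  rcases Nat.eq_or_lt_of_le (show d ≤ L by omega) with hdL | hdL
  · right
    have hsuf : suf = [] := List.eq_nil_of_length_eq_zero (by omega)
    rw [hsuf, List.append_nil] at hsplit
    obtain ⟨h1, h2⟩ := List.append_inj hsplit (by rw [hlenU0, ← hd, ← hdL])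
    exact ⟨hsuf, h1.symm, h2.symm⟩
  exfalso
  -- letter functions
  set Y : ℕ → List A := fun m => if m < N then u (m % k) else v (m % k) with hYdef
  have hWget : ∀ n, n < L → (Cop b e q k l j w).getD n b
      = blkF b e q P (E (n / P)) (cw q b (w (n / P % k))) (n % P) := by
    intro n hn
    have h1 := hgetW0 n (by rw [hNPL]; omega)
    rw [← hPdef] at h1
    exact h1
  have hUVget : ∀ n, n < L + L → (Cop b e q k l j u ++ Cop b e q k l j v).getD n b
      = blkF b e q P (E (n / P)) (cw q b (Y (n / P))) (n % P) := by
    intro n hn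
    by_cases hc : n < L
    · rw [List.getD_append _ _ _ _ (by rw [hlenU0]; omega)]
      have h1 := hgetU0 n (by rw [hNPL]; omega)
      rw [← hPdef] at h1
      rw [h1]
      have hdiv : n / P < N := by
        rw [Nat.div_lt_iff_lt_mul hP0]
        omega
      have hY : Y (n / P) = u (n / P % k) := if_pos hdiv
      rw [hY]
    · rw [List.getD_append_right _ _ _ _ (by rw [hlenU0]; omega)]
      rw [hlenU0]
      have h1 := hgetV0 (n - L) (by rw [hNPL]; omega)
      rw [← hPdef] at h1
      rw [h1]
      have hnrep : n = P * N + (n - L) := by omega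
      have hdiv : n / P = N + (n - L) / P := by
        conv_lhs => rw [hnrep]
        rw [Nat.mul_add_div hP0]
      have hmod : n % P = (n - L) % P := by
        conv_lhs => rw [hnrep]
        rw [Nat.mul_add_mod]
      have hE1 : E (n / P) = E ((n - L) / P) := by rw [hdiv, hEN]
      have hk1 : n / P % k = (n - L) / P % k := by
        rw [hdiv, show N + (n - L) / P = k * q + (n - L) / P by rw [hNdef]; ring,
          Nat.mul_add_mod]
      have hY : Y (n / P) = v (n / P % k) := if_neg (by rw [hdiv]; exact Nat.not_lt.2 (Nat.le_add_right N _))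
      rw [hY, hE1, hmod, hk1]
  have key : ∀ n, n < L →
      blkF b e q P (E ((d + n) / P)) (cw q b (Y ((d + n) / P))) ((d + n) % P)
        = blkF b e q P (E (n / P)) (cw q b (w (n / P % k))) (n % P) := by
    intro n hn
    have h1 : (Cop b e q k l j u ++ Cop b e q k l j v).getD (d + n) b
        = (Cop b e q k l j w).getD n b := by
      rw [hsplit]
      rw [List.getD_append _ _ _ _ (by simp only [List.length_append, hlenW0, ← hd]; omega)]
      rw [List.getD_append_right _ _ _ _ (by omega)]
      rw [show d + n - pre.length = n by omega]
    rw [hUVget (d + n) (by omega), hWget n hn] at h1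
    exact h1
  -- block decomposition of the offset
  set a := d / P with hadef
  set r := d % P with hrdef
  have hdam : P * a + r = d := Nat.div_add_mod d P
  have hr : r < P := Nat.mod_lt _ hP0
  have ha : a < N := by
    rw [hadef, Nat.div_lt_iff_lt_mul hP0]
    omega
  clear_value a r
  have hper : ∀ y : List A, ∀ x x', x % q = x' % q → cw q b y x = cw q b y x' :=
    fun y => cw_periodic q b y
  have hBE : ∀ m, m < N → blockEq b e q P (E m) (E (a + m)) (E (a + m + 1)) r
      (cw q b (w (m % k))) (cw q b (Y (a + m))) (cw q b (Y (a + m + 1))) := by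
    intro m hm s hs
    have hmP : m * P + s < L := by
      have h1 : (m + 1) * P ≤ N * P := Nat.mul_le_mul_right P (by omega)
      have h2 : (m + 1) * P = m * P + P := by ring
      omega
    have hk2 := key (m * P + s) hmP
    have hdiv1 : (m * P + s) / P = m := by
      rw [show m * P + s = P * m + s by ring, Nat.mul_add_div hP0,
        Nat.div_eq_of_lt hs, Nat.add_zero]
    have hmod1 : (m * P + s) % P = s := by
      rw [show m * P + s = P * m + s by ring, Nat.mul_add_mod, Nat.mod_eq_of_lt hs]
    have hsum : d + (m * P + s) = P * (a + m) + (r + s) := by rw [← hdam]; ring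
    by_cases hc : r + s < P
    · have hdiv2 : (d + (m * P + s)) / P = a + m := by
        rw [hsum, Nat.mul_add_div hP0, Nat.div_eq_of_lt hc, Nat.add_zero]
      have hmod2 : (d + (m * P + s)) % P = r + s := by
        rw [hsum, Nat.mul_add_mod, Nat.mod_eq_of_lt hc]
      rw [if_pos hc]
      rw [hdiv1, hmod1, hdiv2, hmod2] at hk2
      exact hk2
    · have hsum2 : d + (m * P + s) = P * (a + m + 1) + (r + s - P) := by
        have h3 : P * (a + m + 1) = P * (a + m) + P := by ring
        omega
      have hdiv2 : (d + (m * P + s)) / P = a + m + 1 := by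
        rw [hsum2, Nat.mul_add_div hP0, Nat.div_eq_of_lt (by omega), Nat.add_zero]
      have hmod2 : (d + (m * P + s)) % P = r + s - P := by
        rw [hsum2, Nat.mul_add_mod, Nat.mod_eq_of_lt (by omega)]
      rw [if_neg hc]
      rw [hdiv1, hmod1, hdiv2, hmod2] at hk2
      exact hk2
  -- F0 : r + q ≤ P
  set i₁ := (p * (q - 1)) % q with hi₁def
  have hi₁ : i₁ < q := Nat.mod_lt _ q0
  clear_value i₁
  have hji₁ : j i₁ = q - 1 := by
    have h1 : (p * j i₁) % q = (p * (q - 1)) % q := by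
      rw [hjmod i₁ hi₁, Nat.mod_eq_of_lt hi₁, hi₁def]
    have h2 : j i₁ ≡ q - 1 [MOD q] :=
      Nat.ModEq.cancel_left_of_coprime hcop.symm (by
        show (p * j i₁) % q = (p * (q - 1)) % q
        exact h1)
    have h3 : j i₁ % q = (q - 1) % q := h2
    rwa [Nat.mod_eq_of_lt (hjlt i₁ hi₁), Nat.mod_eq_of_lt (by omega)] at h3
  set m₀ := (i₁ * k + (N - a)) % N with hm₀def
  have hm₀ : m₀ < N := Nat.mod_lt _ hN0
  clear_value m₀
  have hEam₀ : E (a + m₀) = q - 1 := by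
    rw [hEmod (a + m₀)]
    have h1 : (a + m₀) % N = i₁ * k := by
      rw [hm₀def]
      rw [Nat.add_mod a, Nat.mod_mod_of_dvd _ (dvd_refl N), ← Nat.add_mod]
      rw [show a + (i₁ * k + (N - a)) = i₁ * k + N by omega, Nat.add_mod_right]
      apply Nat.mod_eq_of_lt
      calc i₁ * k < q * k := (Nat.mul_lt_mul_right k0).2 hi₁
        _ = N := hNdef.symm
    rw [h1, hEmk i₁ hi₁, hji₁]
  have hF0 : r + q ≤ P := by
    have h1 := fact1 b e q P hbe hq2 hP5 (E m₀) (E (a + m₀)) (E (a + m₀ + 1)) r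
      (hElt m₀) (by rw [hEam₀]; omega) hr _ _ _ (hBE m₀ hm₀)
    have h2 := hElt m₀
    rw [hEam₀] at h1
    omega
  -- a = 0 from exponent-pattern shift-invariance
  have haz : (∀ m, m < N → E (a + m) = E m) → a = 0 := by
    intro heq
    have h0 := heq 0 hN0
    rw [Nat.add_zero] at h0
    have hak : a / k < q := by
      rw [Nat.div_lt_iff_lt_mul k0]
      have : N = k * q := by rw [hNdef]; ring
      omega
    have hEa : E a = j (a / k) := by
      show j (a / k % q) = j (a / k)
      rw [Nat.mod_eq_of_lt hak]
    have hjak : j (a / k) = 0 := by rw [← hEa, h0, hE0]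
    have hdk0 : a / k = 0 := by
      have h2 := hjmod (a / k) hak
      rw [hjak, Nat.mul_zero, Nat.zero_mod, Nat.mod_eq_of_lt hak] at h2
      omega
    have hak2 : a < k := by
      by_contra hcon
      push_neg at hcon
      have h3 : 1 ≤ a / k := (Nat.one_le_div_iff k0).2 hcon
      omega
    rcases Nat.eq_zero_or_pos a with h | h
    · exact h
    · exfalso
      have hm : k - a < N := by
        have h4 : k ≤ N := by
          rw [hNdef]
          exact Nat.le_mul_of_pos_left k q0
        omega
      have h2 := heq (k - a) hm
      rw [show a + (k - a) = k by omega] at h2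
      have hEka : E (k - a) = 0 := by
        show j ((k - a) / k % q) = 0
        rw [Nat.div_eq_of_lt (by omega), Nat.zero_mod, hj0]
      rw [hEk, hEka] at h2
      rw [h2, Nat.mul_zero, Nat.zero_mod] at hj1
      omega
  -- case r = 0 / middle / high
  rcases Nat.eq_zero_or_pos r with hr0 | hr1
  · -- aligned case
    have heqE : ∀ m, m < N → E (a + m) = E m := by
      intro m hm
      have hEq := hBE m hm
      rw [hr0] at hEq
      have h1 : ¬ (E m < E (a + m)) := fun hlt =>
        fact_aligned b e q P hbe hq2 hP5 hdvd (E m) (E (a + m)) (E (a + m + 1))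
          (hElt m) (hElt _) _ _ _ (hper _) (hper _) hEq hlt
      have hswap : blockEq b e q P (E (a + m)) (E m) (E (a + m + 1)) 0
          (cw q b (Y (a + m))) (cw q b (w (m % k))) (cw q b (Y (a + m + 1))) := by
        intro s hs
        have h2 := hEq s hs
        rw [if_pos (by omega)] at h2 ⊢
        rw [Nat.zero_add] at h2 ⊢
        exact h2.symm
      have h2 : ¬ (E (a + m) < E m) := fun hlt =>
        fact_aligned b e q P hbe hq2 hP5 hdvd (E (a + m)) (E m) (E (a + m + 1))
          (hElt _) (hElt m) _ _ _ (hper _) (hper _) hswap hlt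
      omega
    have ha0 : a = 0 := haz heqE
    rw [ha0, Nat.mul_zero] at hdam
    omega
  rcases le_or_gt (r + 3 * q) P with hreg | hreg
  · -- middle regime
    have hle : ∀ m, m < N → E (a + m) ≤ E m := by
      intro m hm
      by_contra hcon
      push_neg at hcon
      exact fact_mid b e q P hbe hq2 hP5 hdvd (E m) (E (a + m)) (E (a + m + 1)) r
        (hElt _) (hElt _) hr _ _ _ (hper _) (hper _) (hBE m hm) hr1 hreg hcon
    have hsum : ∑ m ∈ Finset.range N, E (a + m) = ∑ m ∈ Finset.range N, E m := by
      calc ∑ m ∈ Finset.range N, E (a + m)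
          = ∑ m ∈ Finset.range N, E ((a + m) % N) :=
            Finset.sum_congr rfl (fun m _ => hEmod (a + m))
        _ = ∑ m ∈ Finset.range N, E (m % N) := sum_shift N E a
        _ = ∑ m ∈ Finset.range N, E m :=
            Finset.sum_congr rfl (fun m hm =>
              congrArg E (Nat.mod_eq_of_lt (Finset.mem_range.1 hm)))
    have heqE : ∀ m, m < N → E (a + m) = E m := by
      intro m hm
      by_contra hne
      have hlt : E (a + m) < E m := lt_of_le_of_ne (hle m hm) hne
      have hslt : ∑ m ∈ Finset.range N, E (a + m) < ∑ m ∈ Finset.range N, E m :=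
        Finset.sum_lt_sum (fun i hi => hle i (Finset.mem_range.1 hi))
          ⟨m, Finset.mem_range.2 hm, hlt⟩
      omega
    have ha0 : a = 0 := haz heqE
    -- final clash at the last block
    have hm₂ : N - 1 < N := by omega
    have hEc := hBE (N - 1) hm₂
    rw [ha0, Nat.zero_add] at hEc
    rw [hEm2, show N - 1 + 1 = N by omega, hENval] at hEc
    exact fact_last b e q P hbe hq2 hP5 (j (q - 1)) r (hjlt _ (by omega)) hjq1 hr1 hF0
      _ _ _ (hper _) hEc
  · -- high regime
    have hstep : ∀ m, m < N → E (a + m) ≤ E (a + m + 1) := by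
      intro m hm
      by_contra hcon
      push_neg at hcon
      exact fact_high b e q P hbe hq2 hP5 hP6 hdvd (E m) (E (a + m)) (E (a + m + 1)) r
        (hElt _) (hElt _) (hElt _) hr _ _ _ (hper _) (hper _) (hBE m hm) hreg hF0 hcon
    have hup : ∀ i, i ≤ N → E a ≤ E (a + i) := by
      intro i
      induction i with
      | zero => intro _; rw [Nat.add_zero]
      | succ i ih =>
        intro hi
        have h1 := ih (by omega)
        have h2 := hstep i (by omega)
        have h3 : a + i + 1 = a + (i + 1) := by ring
        rw [h3] at h2
        omega
    have hdown : ∀ t i, i + t = N → E (a + i) ≤ E (a + N) := by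
      intro t
      induction t with
      | zero => intro i hi; rw [show i = N by omega]
      | succ t ih =>
        intro i hi
        have h2 := hstep i (by omega)
        have h3 := ih (i + 1) (by omega)
        have h4 : a + i + 1 = a + (i + 1) := by ring
        rw [h4] at h2
        omega
    have hEaN : E (a + N) = E a := by rw [Nat.add_comm]; exact hEN a
    have hconst : ∀ i, i ≤ N → E (a + i) = E a := by
      intro i hi
      have h1 := hup i hi
      have h2 := hdown (N - i) i (by omega)
      omega
    have hj1eq : j 1 = 0 := by
      have e1 := hconst (N - a) (by omega)
      rw [show a + (N - a) = N by omega, hENval] at e1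
      rcases le_or_gt k a with hka | hka
      · have e2 := hconst (N + k - a) (by omega)
        rw [show a + (N + k - a) = N + k by omega, hEN, hEk] at e2
        omega
      · have e2 := hconst (k - a) (by
          have h4 : k ≤ N := by
            rw [hNdef]
            exact Nat.le_mul_of_pos_left k q0
          omega)
        rw [show a + (k - a) = k by omega, hEk] at e2
        omega
    rw [hj1eq, Nat.mul_zero, Nat.zero_mod] at hj1
    omega


end Stmt0
end

section
/- Reversal of a circular word: let 0 < p < q with gcd(p,q)=1, k ≥ 1, l > 1, and let w_0,…,w_{k−1} be words over Σ∪{b,e} each of length q. Then (i) for every 0 < i < q one has q − j_i = j_{q−i}; and (ii) with the convention j_q := q, the reversal of C(w_0,…,w_{k−1}) satisfies rev(C(w_0,…,w_{k−1})) = ∏_{i=1}^{q} ∏_{j=1}^{k} e^{q−j_i} rev(w_{k−j})^{l−1} b^{j_i}, where rev denotes reversal of a word. -/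
/-!
Both `q - j i` and `j (q - i)` lie in `[0, q)` and solve `p * x ≡ -i (mod q)`; since `p` is a unit
mod `q` they coincide. Reversing `C` reverses the order of its blocks and each block, so block `i`
of the reversal is `e^{j_{q-1-i}} rev(w_{k-1-t})^{l-1} b^{q-j_{q-1-i}}`, and the first part (with
`j 0 = 0` and `j q = q` at the ends) turns these exponents into `q - j (i+1)` and `j (i+1)`.
-/

namespace Stmt2

/-- The circular operator `C(w_0,…,w_{k−1}) = ∏_{i<q} ∏_{t<k} b^{q−j_i} (w_t)^{l−1} e^{j_i}`. -/
def Cop {A : Type*} (b e : A) (q k l : ℕ) (j : ℕ → ℕ) (w : ℕ → List A) : List A :=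
  (List.range q).flatMap fun i =>
    (List.range k).flatMap fun t =>
      List.replicate (q - j i) b ++ (List.replicate (l - 1) (w t)).flatten ++
        List.replicate (j i) e

theorem reverse_flatMap_range {α : Type*} (n : ℕ) (f : ℕ → List α) :
    ((List.range n).flatMap f).reverse =
      (List.range n).flatMap fun i => (f (n - (i + 1))).reverse := by
  rw [List.reverse_flatMap, List.range_eq_range', List.reverse_range', List.flatMap_map,
    ← List.range_eq_range']
  simp only [zero_add, Nat.sub_sub, add_comm 1, Function.comp_def]

theorem reverse_Cop {A : Type*} (b e : A) (q k l : ℕ) (j : ℕ → ℕ) (w : ℕ → List A) :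
    (Cop b e q k l j w).reverse =
      (List.range q).flatMap fun i =>
        (List.range k).flatMap fun t =>
          List.replicate (j (q - (i + 1))) e ++
            (List.replicate (l - 1) (w (k - (t + 1))).reverse).flatten ++
            List.replicate (q - j (q - (i + 1))) b := by
  simp [Cop, reverse_flatMap_range, List.reverse_flatten, List.append_assoc]

section ModInverse

variable {p q : ℕ} {j : ℕ → ℕ}

theorem eq_of_mul_left_modEq (hcop : p.Coprime q) {x y : ℕ} (hx : x < q) (hy : y < q)
    (h : p * x ≡ p * y [MOD q]) : x = y :=
  (Nat.ModEq.cancel_left_of_coprime hcop.symm h).eq_of_lt_of_lt hx hy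

variable (hcop : p.Coprime q) (hj : ∀ i < q, j i < q ∧ (p * j i) % q = i % q)
include hcop hj

theorem modInv_zero (hq : 0 < q) : j 0 = 0 :=
  eq_of_mul_left_modEq hcop (hj 0 hq).1 hq (hj 0 hq).2

theorem modInv_sub {i : ℕ} (hi0 : 0 < i) (hiq : i < q) : j (q - i) = q - j i := by
  obtain ⟨hji, hpji⟩ := hj i hiq
  obtain ⟨hjqi, hpjqi⟩ := hj (q - i) (by omega)
  have hji0 : 0 < j i := Nat.pos_of_ne_zero fun h => by
    simp [h, Nat.mod_eq_of_lt hiq] at hpji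
    omega
  refine eq_of_mul_left_modEq hcop hjqi (by omega) ?_
  rw [← ZMod.natCast_eq_natCast_iff'] at hpji hpjqi
  rw [← ZMod.natCast_eq_natCast_iff]
  push_cast [Nat.cast_sub hji.le, Nat.cast_sub hiq.le] at hpji hpjqi ⊢
  rw [hpjqi, mul_sub, hpji, ZMod.natCast_self]
  ring

theorem modInv_sub_of_le (hjq : j q = q) {m : ℕ} (hm0 : 0 < m) (hmq : m ≤ q) :
    j (q - m) = q - j m := by
  rcases hmq.lt_or_eq with hmq | rfl
  · exact modInv_sub hcop hj hm0 hmq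
  · simp [hjq, modInv_zero hcop hj hm0]

end ModInverse

theorem reverse_of_circular_word_general
    {A : Type*} (b e : A)
    (p q k l : ℕ) (hcop : Nat.Coprime p q)
    (j : ℕ → ℕ) (hj : ∀ i < q, j i < q ∧ (p * j i) % q = i % q)
    (hjq : j q = q)
    (w : ℕ → List A) :
    (∀ i, 0 < i → i < q → q - j i = j (q - i)) ∧
    (Cop b e q k l j w).reverse =
      (List.range q).flatMap (fun i' =>
        (List.range k).flatMap (fun t' =>
          List.replicate (q - j (i' + 1)) e ++
            (List.replicate (l - 1) (w (k - (t' + 1))).reverse).flatten ++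
            List.replicate (j (i' + 1)) b)) := by
  refine ⟨fun i hi0 hiq => (modInv_sub hcop hj hi0 hiq).symm, ?_⟩
  rw [reverse_Cop]
  refine List.flatMap_congr fun i hi => List.flatMap_congr fun t _ => ?_
  have hiq : i + 1 ≤ q := List.mem_range.1 hi
  have hj_le : j (i + 1) ≤ q := by
    rcases hiq.lt_or_eq with hiq | hiq
    · exact (hj _ hiq).1.le
    · rw [hiq, hjq]
  rw [modInv_sub_of_le hcop hj hjq i.succ_pos hiq, Nat.sub_sub_self hj_le]

/-- Reversal of a circular word: (i) `q − j_i = j_{q−i}` for `0 < i < q`; and (ii) with the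
convention `j_q := q`,
`rev(C(w_0,…,w_{k−1})) = ∏_{i=1}^{q} ∏_{t=1}^{k} e^{q−j_i} rev(w_{k−t})^{l−1} b^{j_i}`. -/
theorem reverse_of_circular_word
    {A : Type*} (b e : A) (hbe : b ≠ e)
    (p q k l : ℕ) (hp0 : 0 < p) (hpq : p < q) (hcop : Nat.Coprime p q)
    (hk : 1 ≤ k) (hl : 1 < l)
    (j : ℕ → ℕ) (hj : ∀ i < q, j i < q ∧ (p * j i) % q = i % q)
    (hjq : j q = q)
    (w : ℕ → List A) (hw : ∀ i < k, (w i).length = q) :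
    (∀ i, 0 < i → i < q → q - j i = j (q - i)) ∧
    (Cop b e q k l j w).reverse =
      (List.range q).flatMap (fun i' =>
        (List.range k).flatMap (fun t' =>
          List.replicate (q - j (i' + 1)) e ++
            (List.replicate (l - 1) (w (k - (t' + 1))).reverse).flatten ++
            List.replicate (j (i' + 1)) b)) :=
  reverse_of_circular_word_general b e p q k l hcop j hj hjq w

end Stmt2
end

section
/- Gap calculation: let w = C(w_0,…,w_{k−1}) with parameters 0 < p < q, gcd(p,q)=1, k ≥ 1, l > 1, each w_j of length q, viewed as a word on [0, klq²). (1) If m_0 and m_1 are positions at which 0-subsections lying in the same 2-subsection of w begin, then m_0 ≡ m_1 (mod q). (2) If m_0 is the beginning of a 0-subsection lying in the i-th 2-subsection of w and m_1 is the beginning of a 0-subsection lying in the (i+1)-st 2-subsection, then m_1 − m_0 ≡ −j_1 (mod q). -/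
/-!
STATEMENT 3: Gap calculation for circular words.
-/

namespace Stmt3

/-- The circular operator `C(w_0,…,w_{k−1}) = ∏_{i<q} ∏_{t<k} b^{q−j_i} (w_t)^{l−1} e^{j_i}`. -/
def Cop {A : Type*} (b e : A) (q k l : ℕ) (j : ℕ → ℕ) (w : ℕ → List A) : List A :=
  (List.range q).flatMap fun i =>
    (List.range k).flatMap fun t =>
      List.replicate (q - j i) b ++ (List.replicate (l - 1) (w t)).flatten ++
        List.replicate (j i) e

/-- Viewing `C(w_0,…,w_{k−1})` on `[0, klq²)`, the 0-subsection `(w_t)^{l−1}` lying in the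
`t`-th 1-subsection of the `i`-th 2-subsection begins at position
`(i·k + t)·lq + (q − j_i)`. -/
def zeroStart (q k l : ℕ) (j : ℕ → ℕ) (i t : ℕ) : ℕ :=
  (i * k + t) * (l * q) + (q - j i)

/-- Gap calculation: (1) the beginnings of two 0-subsections lying in the same 2-subsection
are congruent mod `q`; (2) if `m₀` begins a 0-subsection in the `i`-th 2-subsection and `m₁`
begins a 0-subsection in the `(i+1)`-st, then `m₁ − m₀ ≡ −j_1 (mod q)`. -/
theorem gap_calculation
    {A : Type*} (b e : A) (hbe : b ≠ e)
    (p q k l : ℕ) (hp0 : 0 < p) (hpq : p < q) (hcop : Nat.Coprime p q)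
    (hk : 1 ≤ k) (hl : 1 < l)
    (j : ℕ → ℕ) (hj : ∀ i < q, j i < q ∧ (p * j i) % q = i % q)
    (w : ℕ → List A) (hw : ∀ i < k, (w i).length = q) :
    (∀ i < q, ∀ t₀ < k, ∀ t₁ < k,
      (zeroStart q k l j i t₀ : ℤ) ≡ (zeroStart q k l j i t₁ : ℤ) [ZMOD (q : ℤ)]) ∧
    (∀ i, i + 1 < q → ∀ t₀ < k, ∀ t₁ < k,
      (zeroStart q k l j (i + 1) t₁ : ℤ) - (zeroStart q k l j i t₀ : ℤ)
        ≡ -(j 1 : ℤ) [ZMOD (q : ℤ)]) := by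
  have hq1 : 1 < q := lt_of_le_of_lt hp0 hpq
  constructor
  · intro i hi t₀ _ t₁ _
    have hji : j i ≤ q := (hj i hi).1.le
    rw [Int.modEq_iff_dvd]
    unfold zeroStart
    refine ⟨((t₁ : ℤ) - t₀) * l, ?_⟩
    push_cast [hji]
    ring
  · intro i hi t₀ _ t₁ _
    have hji : j i ≤ q := (hj i (by omega)).1.le
    have hji1 : j (i + 1) ≤ q := (hj (i + 1) hi).1.le
    have h1 : p * j 1 ≡ 1 [MOD q] := (hj 1 hq1).2
    have h2 : p * j i ≡ i [MOD q] := (hj i (by omega)).2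
    have h3 : p * j (i + 1) ≡ i + 1 [MOD q] := (hj (i + 1) hi).2
    have hmod : j i + j 1 ≡ j (i + 1) [MOD q] := by
      apply Nat.ModEq.cancel_left_of_coprime hcop.symm
      calc p * (j i + j 1) = p * j i + p * j 1 := by ring
        _ ≡ i + 1 [MOD q] := Nat.ModEq.add h2 h1
        _ ≡ p * j (i + 1) [MOD q] := h3.symm
    have hdvd : (q : ℤ) ∣ (j (i + 1) : ℤ) - ((j i : ℤ) + (j 1 : ℤ)) := by
      have h := hmod.dvd
      push_cast at h ⊢
      convert h using 1
    rw [Int.modEq_iff_dvd]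
    unfold zeroStart
    have hexp : -(j 1 : ℤ) -
        (((((i + 1) * k + t₁) * (l * q) + (q - j (i + 1)) : ℕ) : ℤ) -
          (((i * k + t₀) * (l * q) + (q - j i) : ℕ) : ℤ))
        = ((j (i + 1) : ℤ) - ((j i : ℤ) + (j 1 : ℤ)))
            - (q : ℤ) * (((i : ℤ) + 1) * k * l + t₁ * l - (i : ℤ) * k * l - t₀ * l) := by
      push_cast [hji, hji1]
      ring
    rw [hexp]
    exact dvd_sub hdvd (dvd_mul_right _ _)


end Stmt3
end

section
/- Alignment of a circular word with its shifted reversal: let w = C(w_0,…,w_{k−1}) with parameters 0 < p < q, gcd(p,q)=1, k ≥ 1, l > 1, each w_j of length q, viewed on [0, klq²), and consider rev(w) placed on the interval [j_1, klq² + j_1) (i.e. the shift sh^{−j_1}(rev(w))). Among the kq(l−1) positions r at which a designated copy of some w_j begins inside a 0-subsection of w, all but at most 2kq have the property that rev(w_{k−j−1}) occupies the interval [r, r+q) in sh^{−j_1}(rev(w)) as a designated copy inside one of the 0-subsections of rev(w). -/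
/-!
Since `p · j_i ≡ i (mod q)`, `j_i` is the residue of `p⁻¹ · i`. Hence, with the convention
`j_q = q`, one has `j_i + j_1 = j_{i+1} + ε_i q` for some `ε_i ∈ {0, 1}` and
`j_{q-1-i} + j_{i+1} = q`. Reading `C(w_0,…,w_{k−1})` backwards, the length-`q` window of
`sh^{−j_1}(rev(w))` at the start of the `c`-th designated copy of `w_t` in the `i`-th
2-subsection is then the reversal of the `(l−2+ε_i−c)`-th designated copy of `w_{k−1−t}` in the
`(q−1−i)`-th 2-subsection, and it is the `(c−ε_i)`-th designated copy of the 0-subsection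
`rev(w_{k−t−1})^{l−1}` of the `(i+1)`-th 2-subsection of `rev(w)`. This works as soon as
`c ≥ ε_i`, so only the `kq` copies with `c = 0` can fail.
-/

namespace Stmt4

/-- The circular operator `C(w_0,…,w_{k−1}) = ∏_{i<q} ∏_{t<k} b^{q−j_i} (w_t)^{l−1} e^{j_i}`. -/
def Cop {A : Type*} (b e : A) (q k l : ℕ) (j : ℕ → ℕ) (w : ℕ → List A) : List A :=
  (List.range q).flatMap fun i =>
    (List.range k).flatMap fun t =>
      List.replicate (q - j i) b ++ (List.replicate (l - 1) (w t)).flatten ++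
        List.replicate (j i) e

/-- Viewing `C(w_0,…,w_{k−1})` on `[0, klq²)`, the `c`-th designated copy of `w_t` within the
0-subsection `(w_t)^{l−1}` of the `i`-th 2-subsection begins at position
`(i·k + t)·lq + (q − j_i) + c·q`. -/
def copyStart (q k l : ℕ) (j : ℕ → ℕ) (i t c : ℕ) : ℕ :=
  (i * k + t) * (l * q) + (q - j i) + c * q

/-- By the reversal formula `rev(w) = ∏_{i'=1}^{q} ∏_{t'=1}^{k} e^{q−j_{i'}} rev(w_{k−t'})^{l−1}
b^{j_{i'}}` (convention `j_q = q`), the `c'`-th designated copy of `rev(w_{k−t'})` in `rev(w)`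
begins at `((i'−1)·k + (t'−1))·lq + (q − j_{i'}) + c'·q`; in the frame of
`sh^{−j_1}(rev(w))` (i.e. `rev(w)` placed on `[j_1, klq² + j_1)`) one adds `j_1`. -/
def revCopyStartShifted (q k l : ℕ) (j : ℕ → ℕ) (i' t' c' : ℕ) : ℕ :=
  j 1 + (((i' - 1) * k + (t' - 1)) * (l * q) + (q - j i') + c' * q)

end Stmt4

namespace List
variable {α : Type*}

theorem take_drop_append_of_le_length {l₁ l₂ : List α} {m s : ℕ} (h : m + s ≤ l₁.length) :
    ((l₁ ++ l₂).drop m).take s = (l₁.drop m).take s := by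
  rw [drop_append_of_le_length (by omega), take_append_of_le_length (by simp; omega)]

theorem flatMap_range_eq_of_lt (F : ℕ → List α) {n i : ℕ} (hi : i < n) :
    (range n).flatMap F = (range i).flatMap F ++ (F i ++ ((range n).drop (i + 1)).flatMap F) := by
  conv_lhs => rw [← take_append_drop i (range n), take_range, min_eq_left hi.le,
    drop_eq_getElem_cons (by simpa using hi), getElem_range, flatMap_append, flatMap_cons]

theorem length_flatMap_range {F : ℕ → List α} {n B : ℕ} (hF : ∀ x < n, (F x).length = B) :
    ((range n).flatMap F).length = n * B := by
  rw [length_flatMap, map_congr_left (fun x hx => hF x (mem_range.1 hx)), map_const',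
    length_range, sum_replicate, smul_eq_mul]

theorem take_drop_flatMap_range {F : ℕ → List α} {n B i m s : ℕ}
    (hF : ∀ x < n, (F x).length = B) (hi : i < n) (hms : m + s ≤ B) :
    (((range n).flatMap F).drop (i * B + m)).take s = ((F i).drop m).take s := by
  rw [flatMap_range_eq_of_lt F hi, ← length_flatMap_range (fun x hx => hF x (hx.trans hi)),
    drop_length_add_append, take_drop_append_of_le_length (by rw [hF i hi]; exact hms)]

theorem take_drop_flatten_replicate {v : List α} {n d : ℕ} (hd : d < n) :
    (((replicate n v).flatten).drop (d * v.length)).take v.length = v := by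
  obtain ⟨r, rfl⟩ := Nat.exists_eq_add_of_lt hd
  have hlen : ((replicate d v).flatten).length = d * v.length := by simp
  rw [add_assoc, replicate_add, flatten_append, ← hlen, drop_left,
    replicate_succ, flatten_cons, take_left]

theorem take_drop_reverse {l : List α} {m s : ℕ} (h : m + s ≤ l.length) :
    (l.reverse.drop (l.length - m - s)).take s = ((l.drop m).take s).reverse := by
  rw [drop_reverse, take_reverse, length_take, min_eq_left (by omega),
    show l.length - (l.length - m - s) = m + s by omega, Nat.add_sub_cancel, drop_take,
    Nat.add_sub_cancel_left]

end List

namespace Stmt4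

section Cop

variable {A : Type*} (b e : A) {q k l : ℕ} {j : ℕ → ℕ} {w : ℕ → List A}

theorem length_cop_block (hl : 1 ≤ l) {i t : ℕ} (hji : j i ≤ q) (hwt : (w t).length = q) :
    (List.replicate (q - j i) b ++ (List.replicate (l - 1) (w t)).flatten ++
      List.replicate (j i) e).length = l * q := by
  obtain ⟨l, rfl⟩ := Nat.exists_eq_add_of_le' hl
  simp only [add_tsub_cancel_right, List.append_assoc, List.length_append,
    List.length_replicate, List.length_flatten, List.map_replicate, hwt, List.sum_replicate,
    smul_eq_mul, add_mul, one_mul]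
  omega

theorem length_cop (hl : 1 ≤ l) (hj_le : ∀ i < q, j i ≤ q) (hw : ∀ t < k, (w t).length = q) :
    (Cop b e q k l j w).length = q * (k * (l * q)) :=
  List.length_flatMap_range fun i hi =>
    List.length_flatMap_range fun t ht => length_cop_block b e hl (hj_le i hi) (hw t ht)

theorem take_drop_cop_copyStart (hl : 1 ≤ l) (hj_le : ∀ i < q, j i ≤ q)
    (hw : ∀ t < k, (w t).length = q) {i t c : ℕ} (hi : i < q) (ht : t < k) (hc : c < l - 1) :
    ((Cop b e q k l j w).drop (copyStart q k l j i t c)).take q = w t := by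
  have hcl : c * q + q ≤ l * q - q := by
    rw [← Nat.succ_mul, ← Nat.sub_one_mul]; exact Nat.mul_le_mul_right q hc
  have htk : t * (l * q) + l * q ≤ k * (l * q) := by
    rw [← Nat.succ_mul]; exact Nat.mul_le_mul_right _ ht
  have hstart :
      copyStart q k l j i t c = i * (k * (l * q)) + (t * (l * q) + (q - j i + c * q)) := by
    unfold copyStart; ring
  rw [Cop, hstart,
    List.take_drop_flatMap_range (fun i hi => List.length_flatMap_range fun t ht =>
      length_cop_block b e hl (hj_le i hi) (hw t ht)) hi (by omega),
    List.take_drop_flatMap_range (fun t ht => length_cop_block b e hl (hj_le i hi) (hw t ht)) ht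
      (by omega),
    List.append_assoc, List.drop_append, List.drop_eq_nil_of_le (by simp), List.nil_append,
    List.length_replicate, Nat.add_sub_cancel_left,
    List.take_drop_append_of_le_length (by simp [hw t ht, Nat.sub_one_mul, hcl]), ← hw t ht,
    List.take_drop_flatten_replicate hc]

theorem revCopyStartShifted_succ_succ {i t c ε : ℕ} (hji : j i ≤ q) (hji1 : j (i + 1) ≤ q)
    (hε : j i + j 1 = j (i + 1) + ε * q) (hεc : ε ≤ c) :
    revCopyStartShifted q k l j (i + 1) (t + 1) (c - ε) = copyStart q k l j i t c := by
  have hεq : ε * q ≤ c * q := Nat.mul_le_mul_right q hεc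
  simp only [revCopyStartShifted, copyStart, Nat.add_sub_cancel, Nat.sub_mul]
  omega

theorem take_drop_reverse_cop (hl : 1 ≤ l) (hj_le : ∀ i < q, j i ≤ q)
    (hw : ∀ t < k, (w t).length = q) {i t c ε : ℕ} (hi : i < q) (ht : t < k) (hc : c < l - 1)
    (hε : j i + j 1 = j (i + 1) + ε * q) (hεc : ε ≤ c) (hrefl : j (q - 1 - i) + j (i + 1) = q) :
    ((Cop b e q k l j w).reverse.drop (copyStart q k l j i t c - j 1)).take q
      = (w (k - t - 1)).reverse := by
  set d := l - 2 + ε - c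
  have hwin := take_drop_cop_copyStart b e hl hj_le hw (i := q - 1 - i) (t := k - 1 - t) (c := d)
    (by omega) (by omega) (by omega)
  have hfit : copyStart q k l j (q - 1 - i) (k - 1 - t) d + q ≤ (Cop b e q k l j w).length := by
    have := congrArg List.length hwin
    rw [List.length_take, List.length_drop, hw _ (by omega)] at this
    omega
  have hidx : i * k + t + ((q - 1 - i) * k + (k - 1 - t)) + 1 = q * k := by
    have hik : i * k + k ≤ q * k := by rw [← Nat.succ_mul]; exact Nat.mul_le_mul_right k hi
    rw [show q - 1 - i = q - (i + 1) by omega, Nat.sub_mul, Nat.succ_mul]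
    omega
  have hblocks : (i * k + t) * (l * q) + ((q - 1 - i) * k + (k - 1 - t)) * (l * q) + l * q
      = q * (k * (l * q)) := by
    rw [← add_mul, ← Nat.succ_mul, Nat.succ_eq_add_one, hidx, mul_assoc]
  have hcd : c * q + d * q + 2 * q = l * q + ε * q := by
    rw [← add_mul, ← add_mul, ← add_mul]; congr 1; omega
  have hεq : ε * q ≤ c * q := Nat.mul_le_mul_right q hεc
  have hstart : copyStart q k l j i t c - j 1
      = (Cop b e q k l j w).length - copyStart q k l j (q - 1 - i) (k - 1 - t) d - q := by
    rw [length_cop b e hl hj_le hw] at hfit ⊢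
    have := hj_le i hi
    simp only [copyStart] at hfit ⊢
    omega
  rw [hstart, List.take_drop_reverse hfit, hwin, show k - 1 - t = k - t - 1 by omega]

end Cop

section ModularInverse

variable {p q : ℕ} {j : ℕ → ℕ}

theorem natCast_j (hcop : p.Coprime q) (hj : ∀ i < q, j i < q ∧ (p * j i) % q = i % q)
    {i : ℕ} (hi : i < q) : (j i : ZMod q) = (p : ZMod q)⁻¹ * i := by
  have h : ((p * j i : ℕ) : ZMod q) = i := (ZMod.natCast_eq_natCast_iff' _ _ _).2 (hj i hi).2
  rw [← h, Nat.cast_mul, ← mul_assoc, mul_comm _ (p : ZMod q), ZMod.coe_mul_inv_eq_one p hcop,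
    one_mul]

theorem j_eq_of_natCast_eq (hcop : p.Coprime q) (hj : ∀ i < q, j i < q ∧ (p * j i) % q = i % q)
    {i x : ℕ} (hi : i < q) (hx : x < q) (h : (x : ZMod q) = (p : ZMod q)⁻¹ * i) : j i = x := by
  rw [← ZMod.val_natCast_of_lt (hj i hi).1, ← ZMod.val_natCast_of_lt hx, natCast_j hcop hj hi, h]

theorem j_pos (hj : ∀ i < q, j i < q ∧ (p * j i) % q = i % q) {i : ℕ} (hi0 : 0 < i)
    (hi : i < q) : 0 < j i := by
  by_contra! h0
  have h := (hj i hi).2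
  rw [Nat.le_zero.1 h0, mul_zero, Nat.zero_mod, Nat.mod_eq_of_lt hi] at h
  omega

theorem j_succ_eq_add_mod (hcop : p.Coprime q) (hj : ∀ i < q, j i < q ∧ (p * j i) % q = i % q)
    {i : ℕ} (hi : i + 1 < q) : j (i + 1) = (j i + j 1) % q := by
  refine j_eq_of_natCast_eq hcop hj hi (Nat.mod_lt _ (by omega)) ?_
  rw [ZMod.natCast_mod, Nat.cast_add, natCast_j hcop hj (by omega), natCast_j hcop hj (by omega)]
  push_cast
  ring

theorem j_sub_one_sub_add_j_succ (hcop : p.Coprime q)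
    (hj : ∀ i < q, j i < q ∧ (p * j i) % q = i % q) (hjq : j q = q) {i : ℕ} (hi : i < q) :
    j (q - 1 - i) + j (i + 1) = q := by
  rcases Nat.lt_or_ge (i + 1) q with hi1 | hi1
  · have hpos := j_pos hj (by omega : 0 < i + 1) hi1
    have hlt := (hj _ hi1).1
    suffices j (q - 1 - i) = q - j (i + 1) by omega
    refine j_eq_of_natCast_eq hcop hj (by omega) (by omega) ?_
    rw [Nat.cast_sub (hj _ hi1).1.le, natCast_j hcop hj hi1,
      show q - 1 - i = q - (i + 1) by omega, Nat.cast_sub hi1.le, ZMod.natCast_self]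
    ring
  · have hj0 : j 0 = 0 := j_eq_of_natCast_eq hcop hj (by omega) (by omega) (by simp)
    rw [show i + 1 = q by omega, hjq, show q - 1 - i = 0 by omega, hj0, zero_add]

theorem exists_j_add_j_one (hcop : p.Coprime q) (hj : ∀ i < q, j i < q ∧ (p * j i) % q = i % q)
    (hjq : j q = q) (hq : 1 < q) {i : ℕ} (hi : i < q) :
    ∃ ε ≤ 1, j i + j 1 = j (i + 1) + ε * q := by
  rcases Nat.lt_or_ge (i + 1) q with hi1 | hi1
  · refine ⟨(j i + j 1) / q, ?_, ?_⟩
    · have := (hj i hi).1; have := (hj 1 hq).1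
      rw [Nat.div_le_iff_le_mul_add_pred (by omega)]; omega
    · rw [j_succ_eq_add_mod hcop hj hi1, Nat.mod_add_div']
  · obtain rfl : i = q - 1 := by omega
    have h := j_sub_one_sub_add_j_succ hcop hj hjq (i := 0) (by omega)
    rw [Nat.sub_zero, zero_add] at h
    refine ⟨0, zero_le_one, ?_⟩
    rw [Nat.sub_add_cancel hq.le, hjq]
    omega

end ModularInverse

open Classical in
theorem alignment_with_shifted_reversal_general
    {A : Type*} (b e : A)
    (p q k l : ℕ) (hp0 : 0 < p) (hpq : p < q) (hcop : Nat.Coprime p q)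
    (hl : 1 < l)
    (j : ℕ → ℕ) (hj : ∀ i < q, j i < q ∧ (p * j i) % q = i % q)
    (hjq : j q = q)
    (w : ℕ → List A) (hw : ∀ i < k, (w i).length = q) :
    ((Finset.range q ×ˢ Finset.range k ×ˢ Finset.range (l - 1)).card = q * k * (l - 1)) ∧
    ((Finset.range q ×ˢ Finset.range k ×ˢ Finset.range (l - 1)).filter
      (fun itc : ℕ × ℕ × ℕ =>
        ¬ ∃ i' c', 1 ≤ i' ∧ i' ≤ q ∧ c' < l - 1 ∧
          revCopyStartShifted q k l j i' (itc.2.1 + 1) c'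
              = copyStart q k l j itc.1 itc.2.1 itc.2.2 ∧
          (((Cop b e q k l j w).reverse.drop
              (copyStart q k l j itc.1 itc.2.1 itc.2.2 - j 1)).take q
            = (w (k - itc.2.1 - 1)).reverse))).card ≤ 2 * k * q := by
  have hq : 1 < q := by omega
  have hj_le : ∀ i < q, j i ≤ q := fun i hi => (hj i hi).1.le
  have aligned : ∀ i < q, ∀ t < k, ∀ c < l - 1, 0 < c →
      ∃ i' c', 1 ≤ i' ∧ i' ≤ q ∧ c' < l - 1 ∧
        revCopyStartShifted q k l j i' (t + 1) c' = copyStart q k l j i t c ∧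
        ((Cop b e q k l j w).reverse.drop (copyStart q k l j i t c - j 1)).take q
          = (w (k - t - 1)).reverse := by
    intro i hi t ht c hc hc0
    obtain ⟨ε, hε1, hε⟩ := exists_j_add_j_one hcop hj hjq hq hi
    have hrefl := j_sub_one_sub_add_j_succ hcop hj hjq hi
    exact ⟨i + 1, c - ε, by omega, by omega, by omega,
      revCopyStartShifted_succ_succ (hj_le i hi) (by omega) hε (by omega),
      take_drop_reverse_cop b e hl.le hj_le hw hi ht hc hε (by omega) hrefl⟩
  refine ⟨by simp only [Finset.card_product, Finset.card_range, mul_assoc], ?_⟩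
  calc _ ≤ (Finset.range q ×ˢ Finset.range k ×ˢ {0}).card := by
        refine Finset.card_le_card fun x hx => ?_
        simp only [Finset.mem_filter, Finset.mem_product, Finset.mem_range] at hx
        simp only [Finset.mem_product, Finset.mem_range, Finset.mem_singleton]
        refine ⟨hx.1.1, hx.1.2.1, ?_⟩
        by_contra hc0
        exact hx.2 (aligned _ hx.1.1 _ hx.1.2.1 _ hx.1.2.2 (Nat.pos_of_ne_zero hc0))
    _ = q * k := by
        simp only [Finset.card_product, Finset.card_range, Finset.card_singleton, mul_one]
    _ ≤ 2 * k * q := by nlinarith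

open Classical in
/-- Alignment with the shifted reversal: among the `kq(l−1)` designated copies of the words
`w_t` in `w = C(w_0,…,w_{k−1})` (indexed by the 2-subsection `i < q`, the word index `t < k`
and the copy index `c < l−1`, beginning at `r = copyStart q k l j i t c`), all but at most
`2kq` are such that the designated copy of `rev(w_{k−t−1})` (word index `t' = t+1`) of some
0-subsection of `rev(w)` occupies exactly the interval `[r, r+q)` of `sh^{−j_1}(rev(w))`. -/
theorem alignment_with_shifted_reversal
    {A : Type*} (b e : A) (hbe : b ≠ e)
    (p q k l : ℕ) (hp0 : 0 < p) (hpq : p < q) (hcop : Nat.Coprime p q)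
    (hk : 1 ≤ k) (hl : 1 < l)
    (j : ℕ → ℕ) (hj : ∀ i < q, j i < q ∧ (p * j i) % q = i % q)
    (hjq : j q = q)
    (w : ℕ → List A) (hw : ∀ i < k, (w i).length = q) :
    ((Finset.range q ×ˢ Finset.range k ×ˢ Finset.range (l - 1)).card = q * k * (l - 1)) ∧
    ((Finset.range q ×ˢ Finset.range k ×ˢ Finset.range (l - 1)).filter
      (fun itc : ℕ × ℕ × ℕ =>
        ¬ ∃ i' c', 1 ≤ i' ∧ i' ≤ q ∧ c' < l - 1 ∧
          revCopyStartShifted q k l j i' (itc.2.1 + 1) c'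
              = copyStart q k l j itc.1 itc.2.1 itc.2.2 ∧
          (((Cop b e q k l j w).reverse.drop
              (copyStart q k l j itc.1 itc.2.1 itc.2.2 - j 1)).take q
            = (w (k - itc.2.1 - 1)).reverse))).card ≤ 2 * k * q :=
  alignment_with_shifted_reversal_general b e p q k l hp0 hpq hcop hl j hj hjq w hw

end Stmt4
end

section
/- First slip proposition: let w = C(v_0,…,v_{k−1}) and w' = C(v'_0,…,v'_{k−1}) be built with the same parameters 0 < p < q, gcd(p,q)=1, k ≥ 1, l > 1, where all v_i, v'_i have length q. View w on [0, klq²) and place rev(w') on [j_1, klq² + j_1) (i.e. consider sh^{−j_1}(rev(w'))). Then: (1) for every i and every position r at which a designated copy of v_i begins in w, either rev(v'_{k−i−1}) occupies [r, r+q) in sh^{−j_1}(rev(w')) as a designated copy, or the interval [r, r+q) is entirely contained in the boundary of sh^{−j_1}(rev(w')); (2) there is a number C such that for every 0 ≤ i < k, the number of designated copies of v_i in w that are aligned with a designated copy of rev(v'_{k−i−1}) in sh^{−j_1}(rev(w')) equals C. -/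
/-!
STATEMENT 5: First slip proposition.
-/

namespace Stmt5

/-- The circular operator `C(w_0,…,w_{k−1}) = ∏_{i<q} ∏_{t<k} b^{q−j_i} (w_t)^{l−1} e^{j_i}`. -/
def Cop {A : Type*} (b e : A) (q k l : ℕ) (j : ℕ → ℕ) (w : ℕ → List A) : List A :=
  (List.range q).flatMap fun i =>
    (List.range k).flatMap fun t =>
      List.replicate (q - j i) b ++ (List.replicate (l - 1) (w t)).flatten ++
        List.replicate (j i) e

/-- Position at which the `c`-th designated copy of `w_t` in the `i`-th 2-subsection of a
circular word begins (the word being viewed on `[0, klq²)`). -/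
def copyStart (q k l : ℕ) (j : ℕ → ℕ) (i t c : ℕ) : ℕ :=
  (i * k + t) * (l * q) + (q - j i) + c * q

/-- Position (in the frame of `sh^{−j_1}(rev(w'))`, i.e. `rev(w')` placed on
`[j_1, klq² + j_1)`) at which the `c'`-th designated copy of `rev(v'_{k−t'})` in the `i'`-th
(for `1 ≤ i' ≤ q`, `1 ≤ t' ≤ k`) block of `rev(w')` begins, using the reversal formula
`rev(w') = ∏_{i'=1}^{q} ∏_{t'=1}^{k} e^{q−j_{i'}} rev(v'_{k−t'})^{l−1} b^{j_{i'}}`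
(convention `j_q = q`). -/
def revCopyStartShifted (q k l : ℕ) (j : ℕ → ℕ) (i' t' c' : ℕ) : ℕ :=
  j 1 + (((i' - 1) * k + (t' - 1)) * (l * q) + (q - j i') + c' * q)

/-- The boundary positions of a circular word on `[0, klq²)`. -/
def boundarySet (q k l : ℕ) (j : ℕ → ℕ) : Finset ℕ :=
  (Finset.range (k * l * q ^ 2)).filter fun m =>
    m % (l * q) < q - j (m / (l * q) / k) ∨
      q - j (m / (l * q) / k) + (l - 1) * q ≤ m % (l * q)

/-- Membership of the absolute position `m` in the boundary of `sh^{−j_1}(rev(w'))`: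
`m − j_1` is a position of `rev(w')`, and reversal carries it to a boundary position of
`w'`. -/
def InShiftedRevBoundary (q k l : ℕ) (j : ℕ → ℕ) (m : ℕ) : Prop :=
  j 1 ≤ m ∧ m < k * l * q ^ 2 + j 1 ∧ (k * l * q ^ 2 - 1 - (m - j 1)) ∈ boundarySet q k l j

/-- Alignment of the designated copy indexed by `(i, t, c)` of `v_t` in `w = C(v_0,…,v_{k−1})`
with a designated copy of `rev(v'_{k−t−1})` in `sh^{−j_1}(rev(w'))`, `w' = C(v'_0,…,v'_{k−1})`:
the copy of `rev(v'_{k−t−1})` (block index `t' = t+1`) begins at the same absolute position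
`r = copyStart q k l j i t c`, and `rev(v'_{k−t−1})` indeed occupies `[r, r+q)` there. -/
def Aligned {A : Type*} (q k l : ℕ) (j : ℕ → ℕ) (w'rev : List A) (v' : ℕ → List A)
    (i t c : ℕ) : Prop :=
  ∃ i' c', 1 ≤ i' ∧ i' ≤ q ∧ c' < l - 1 ∧
    revCopyStartShifted q k l j i' (t + 1) c' = copyStart q k l j i t c ∧
    ((w'rev.drop (copyStart q k l j i t c - j 1)).take q = (v' (k - t - 1)).reverse)


section Helpers
variable {α : Type*}

lemma length_flatMap_const (f : ℕ → List α) (s : ℕ) :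
    ∀ n, (∀ i < n, (f i).length = s) → ((List.range n).flatMap f).length = n * s := by
  intro n
  induction n with
  | zero => simp
  | succ n ih =>
    intro h
    rw [List.range_succ, List.flatMap_append, List.length_append,
      ih (fun i hi => h i (by omega))]
    simp [h n (by omega), Nat.succ_mul]

lemma take_drop_append (X Y : List α) (r t' : ℕ) (h : r + t' ≤ X.length) :
    ((X ++ Y).drop r).take t' = (X.drop r).take t' := by
  rw [List.drop_append_of_le_length (by omega),
    List.take_append_of_le_length (by rw [List.length_drop]; omega)]

lemma extract_flatMap (s t' : ℕ) :
    ∀ (m n : ℕ) (f : ℕ → List α) (r : ℕ), (∀ i < n, (f i).length = s) → m < n →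
      r + t' ≤ s →
      (((List.range n).flatMap f).drop (m * s + r)).take t' = ((f m).drop r).take t' := by
  intro m
  induction m with
  | zero =>
    intro n f r hf hm hr
    obtain ⟨n', rfl⟩ : ∃ n', n = n' + 1 := ⟨n - 1, by omega⟩
    rw [List.range_succ_eq_map, List.flatMap_cons, Nat.zero_mul, Nat.zero_add]
    exact take_drop_append _ _ _ _ (by rw [hf 0 (by omega)]; omega)
  | succ m ih =>
    intro n f r hf hm hr
    obtain ⟨n', rfl⟩ : ∃ n', n = n' + 1 := ⟨n - 1, by omega⟩
    rw [List.range_succ_eq_map, List.flatMap_cons]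
    have h1 : (m + 1) * s + r = s + (m * s + r) := by ring
    rw [h1, ← List.drop_drop, List.drop_left' (hf 0 (by omega)), List.flatMap_map]
    exact ih n' (fun i => f (i + 1)) r (fun i hi => hf (i + 1) (by omega)) (by omega) hr

lemma flatten_replicate_eq (xs : List α) (n : ℕ) :
    (List.replicate n xs).flatten = (List.range n).flatMap (fun _ => xs) := by
  induction n with
  | zero => simp
  | succ n ih =>
    rw [List.range_succ_eq_map, List.flatMap_cons, List.flatMap_map, List.replicate_succ,
      List.flatten_cons, ih]

lemma rev_extract (L : List α) (u q' : ℕ) (h : u + q' ≤ L.length) :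
    (L.reverse.drop u).take q' = ((L.drop (L.length - u - q')).take q').reverse := by
  have h1 : L.reverse.drop u = (L.take (L.length - u)).reverse := by
    rw [List.reverse_take]
    congr 1
    omega
  rw [h1]
  set X := L.take (L.length - u) with hX
  have hXlen : X.length = L.length - u := by
    rw [hX, List.length_take]; omega
  have h2 : (X.drop (X.length - q')).reverse = X.reverse.take q' := by
    rw [List.reverse_drop, hXlen]
    congr 1
    omega
  rw [← h2, hXlen, hX, List.drop_take]
  have : L.length - u - (L.length - u - q') = q' := by omega
  rw [this]

end Helpers
section CopHelpers
variable {α : Type*}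

lemma blk_length (b e : α) (q l : ℕ) (ji : ℕ) (hji : ji ≤ q) (hl : 1 ≤ l)
    (xs : List α) (hxs : xs.length = q) :
    (List.replicate (q - ji) b ++ (List.replicate (l - 1) xs).flatten ++
      List.replicate ji e).length = l * q := by
  have hfl : ((List.replicate (l - 1) xs).flatten).length = (l - 1) * q := by
    rw [flatten_replicate_eq, length_flatMap_const _ q _ (fun i _ => hxs)]
  simp only [List.length_append, List.length_replicate, hfl]
  have h1 : (l - 1) * q + q = l * q := by
    have : (l - 1) + 1 = l := by omega
    calc (l - 1) * q + q = ((l - 1) + 1) * q := by ring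
    _ = l * q := by rw [this]
  omega

lemma cop_length (b e : α) (q k l : ℕ) (j : ℕ → ℕ) (w : ℕ → List α)
    (hl : 1 ≤ l) (hw : ∀ t < k, (w t).length = q) (hj : ∀ i < q, j i ≤ q) :
    (Cop b e q k l j w).length = k * l * q ^ 2 := by
  have h : (Cop b e q k l j w).length = q * (k * (l * q)) := by
    apply length_flatMap_const
    intro i hi
    apply length_flatMap_const
    intro t ht
    exact blk_length b e q l (j i) (hj i hi) hl (w t) (hw t ht)
  rw [h]; ring

lemma cop_extract (b e : α) (q k l : ℕ) (j : ℕ → ℕ) (w : ℕ → List α)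
    (hl : 1 < l) (hw : ∀ t < k, (w t).length = q) (hj : ∀ i < q, j i ≤ q)
    (i t c : ℕ) (hi : i < q) (ht : t < k) (hc : c < l - 1) :
    ((Cop b e q k l j w).drop (copyStart q k l j i t c)).take q = w t := by
  have hq0 : q - j i ≤ q := Nat.sub_le _ _
  have hcs : copyStart q k l j i t c
      = i * (k * (l * q)) + (t * (l * q) + ((q - j i) + c * q)) := by
    show (i * k + t) * (l * q) + (q - j i) + c * q = _
    ring
  have hF : ∀ i' < q, ((List.range k).flatMap (fun t' =>
      List.replicate (q - j i') b ++ (List.replicate (l - 1) (w t')).flatten ++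
        List.replicate (j i') e)).length = k * (l * q) := by
    intro i' hi'
    exact length_flatMap_const _ _ _ (fun t' ht' =>
      blk_length b e q l (j i') (hj i' hi') (by omega) (w t') (hw t' ht'))
  -- bound for the first extraction
  have hmul1 : t * (l * q) + (l * q) ≤ k * (l * q) := by
    have : (t + 1) * (l * q) ≤ k * (l * q) := Nat.mul_le_mul_right _ (by omega)
    calc t * (l * q) + l * q = (t + 1) * (l * q) := by ring
    _ ≤ k * (l * q) := this
  have hmul2 : c * q + 2 * q ≤ l * q := by
    have : (c + 2) * q ≤ l * q := Nat.mul_le_mul_right _ (by omega)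
    calc c * q + 2 * q = (c + 2) * q := by ring
    _ ≤ l * q := this
  have hr1 : t * (l * q) + ((q - j i) + c * q) + q ≤ k * (l * q) := by
    have h2q : 2 * q ≤ l * q := Nat.mul_le_mul_right _ (by omega)
    linarith
  rw [hcs]
  unfold Cop
  rw [extract_flatMap (k * (l * q)) q i q _ _ hF hi hr1]
  have hr2 : (q - j i) + c * q + q ≤ l * q := by linarith
  rw [extract_flatMap (l * q) q t k _ _ (fun t' ht' =>
      blk_length b e q l (j i) (hj i hi) (by omega) (w t') (hw t' ht')) ht hr2]
  -- now inside the single block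
  rw [List.append_assoc]
  have hdra : ((q - j i) + c * q) = (List.replicate (q - j i) b).length + c * q := by
    rw [List.length_replicate]
  rw [hdra, ← List.drop_drop, List.drop_left]
  have hflen : ((List.replicate (l - 1) (w t)).flatten).length = (l - 1) * q := by
    rw [flatten_replicate_eq, length_flatMap_const _ q _ (fun i' _ => hw t ht)]
  rw [take_drop_append _ _ _ _ (by
    rw [hflen]
    have : (c + 1) * q ≤ (l - 1) * q := Nat.mul_le_mul_right _ (by omega)
    linarith)]
  rw [flatten_replicate_eq]
  have := extract_flatMap (α := α) q q c (l - 1) (fun _ => w t) 0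
    (fun i' _ => hw t ht) hc (by omega)
  rw [Nat.add_zero] at this
  rw [this, List.drop_zero, ← hw t ht, List.take_length]

end CopHelpers
section MainHelpers
variable {α : Type*}

lemma stringEq_lemma (b e : α) (q k l : ℕ) (j : ℕ → ℕ) (v' : ℕ → List α)
    (hq : 0 < q) (hl : 1 < l) (hk : 1 ≤ k)
    (hv' : ∀ i < k, (v' i).length = q)
    (hjle : ∀ i ≤ q, j i ≤ q)
    (hjsum : ∀ i', 1 ≤ i' → i' ≤ q → j i' + j (q - i') = q)
    (i' t c' : ℕ) (hi'1 : 1 ≤ i') (hi'q : i' ≤ q) (ht : t < k) (hc' : c' < l - 1) :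
    (((Cop b e q k l j v').reverse).drop
        (revCopyStartShifted q k l j i' (t + 1) c' - j 1)).take q
      = (v' (k - t - 1)).reverse := by
  obtain ⟨a, ha⟩ : ∃ a, a + 1 = i' := ⟨i' - 1, by omega⟩
  obtain ⟨d, hd⟩ : ∃ d, i' + d = q := ⟨q - i', by omega⟩
  obtain ⟨t₃, ht₃⟩ : ∃ t₃, t + t₃ + 1 = k := ⟨k - t - 1, by omega⟩
  obtain ⟨c₂, hc₂⟩ : ∃ c₂, c' + c₂ + 2 = l := ⟨l - c' - 2, by omega⟩
  have hji' : j i' ≤ q := hjle i' hi'q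
  have hjdle : j d ≤ q := hjle d (by omega)
  have hjs : j i' + j d = q := by
    rw [show d = q - i' from by omega]
    exact hjsum i' hi'1 hi'q
  have hU : revCopyStartShifted q k l j i' (t + 1) c' - j 1
      = (a * k + t) * (l * q) + (q - j i') + c' * q := by
    unfold revCopyStartShifted
    rw [Nat.add_sub_cancel_left, show i' - 1 = a from by omega, Nat.add_sub_cancel]
  have hlen : (Cop b e q k l j v').length = k * l * q ^ 2 :=
    cop_length b e q k l j v' (by omega) hv' (fun i hi => hjle i (le_of_lt hi))
  have hq1 : (a * k + t) + 1 ≤ q * k := by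
    have h1 : (a + 1) * k ≤ q * k := Nat.mul_le_mul_right _ (by omega)
    have h2 : (a + 1) * k = a * k + k := by ring
    linarith
  have hprod1 : (a * k + t) * (l * q) + l * q ≤ q * k * (l * q) := by
    have h1 := Nat.mul_le_mul_right (l * q) hq1
    have h2 : ((a * k + t) + 1) * (l * q) = (a * k + t) * (l * q) + l * q := by ring
    linarith
  have hcq : c' * q + 2 * q ≤ l * q := by
    have h1 : (c' + 2) * q ≤ l * q := Nat.mul_le_mul_right _ (by omega)
    have h2 : (c' + 2) * q = c' * q + 2 * q := by ring
    linarith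
  have hN : k * l * q ^ 2 = q * k * (l * q) := by ring
  have hsubq : q - j i' ≤ q := Nat.sub_le _ _
  have hUq : (a * k + t) * (l * q) + (q - j i') + c' * q + q
      ≤ (Cop b e q k l j v').length := by
    rw [hlen, hN]
    linarith
  rw [hU, rev_extract _ _ _ hUq, hlen]
  have hkey : k * l * q ^ 2 - ((a * k + t) * (l * q) + (q - j i') + c' * q) - q
      = copyStart q k l j d t₃ c₂ := by
    rw [Nat.sub_sub]
    apply Nat.sub_eq_of_eq_add
    show k * l * q ^ 2 = (d * k + t₃) * (l * q) + (q - j d) + c₂ * q + _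
    have e1 : q - j d = j i' := by omega
    have e2 : q - j i' = j d := by omega
    rw [e1, e2]
    have p1 : (d * k + t₃) + (a * k + t) + 1 = q * k := by
      have h3 : q * k = d * k + a * k + k := by
        rw [show q = d + a + 1 from by omega]; ring
      linarith
    have p3 : ((d * k + t₃) + (a * k + t) + 1) * (l * q)
        = (d * k + t₃) * (l * q) + (a * k + t) * (l * q) + l * q := by ring
    have p2 : ((d * k + t₃) + (a * k + t) + 1) * (l * q) = q * k * (l * q) := by rw [p1]
    have p4 : (c₂ + c' + 2) * q = l * q := by rw [show c₂ + c' + 2 = l from by omega]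
    have p5 : (c₂ + c' + 2) * q = c₂ * q + c' * q + 2 * q := by ring
    linarith
  rw [hkey, cop_extract b e q k l j v' hl hv' (fun i hi => hjle i (le_of_lt hi)) d t₃ c₂
    (by omega) (by omega) (by omega)]
  rw [show k - t - 1 = t₃ from by omega]

lemma boundary_mem (q k l : ℕ) (j : ℕ → ℕ) (hq : 0 < q) (hk : 0 < k) (hl : 0 < l)
    (i₃ t₃ off : ℕ) (hi₃ : i₃ < q) (ht₃ : t₃ < k) (hoff : off < l * q)
    (hcond : off < q - j i₃ ∨ q - j i₃ + (l - 1) * q ≤ off) :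
    ((i₃ * k + t₃) * (l * q) + off) ∈ boundarySet q k l j := by
  have hlq : 0 < l * q := by positivity
  have hcm : (i₃ * k + t₃) * (l * q) = (l * q) * (i₃ * k + t₃) := by ring
  have hmod : ((i₃ * k + t₃) * (l * q) + off) % (l * q) = off := by
    rw [hcm, Nat.mul_add_mod, Nat.mod_eq_of_lt hoff]
  have hdiv : ((i₃ * k + t₃) * (l * q) + off) / (l * q) / k = i₃ := by
    rw [hcm, Nat.mul_add_div hlq, Nat.div_eq_of_lt hoff, Nat.add_zero,
      show i₃ * k + t₃ = k * i₃ + t₃ from by ring, Nat.mul_add_div hk,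
      Nat.div_eq_of_lt ht₃, Nat.add_zero]
  have hrange : (i₃ * k + t₃) * (l * q) + off < k * l * q ^ 2 := by
    have hb : (i₃ * k + t₃) + 1 ≤ q * k := by
      have h1 : (i₃ + 1) * k ≤ q * k := Nat.mul_le_mul_right _ (by omega)
      have h2 : (i₃ + 1) * k = i₃ * k + k := by ring
      linarith
    have h3 := Nat.mul_le_mul_right (l * q) hb
    have h4 : ((i₃ * k + t₃) + 1) * (l * q) = (i₃ * k + t₃) * (l * q) + l * q := by ring
    have h5 : q * k * (l * q) = k * l * q ^ 2 := by ring
    linarith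
  unfold boundarySet
  rw [Finset.mem_filter, Finset.mem_range]
  exact ⟨hrange, by rw [hmod, hdiv]; exact hcond⟩

end MainHelpers
set_option maxHeartbeats 2000000 in
open Classical in
/-- First slip: with `w = C(v_0,…,v_{k−1})` on `[0, klq²)` and `rev(w')` placed on
`[j_1, klq² + j_1)` (`w' = C(v'_0,…,v'_{k−1})`): (1) every designated copy of each `v_t` in
`w` is either aligned with a designated copy of `rev(v'_{k−t−1})` in `sh^{−j_1}(rev(w'))` or
lies entirely over the boundary of `sh^{−j_1}(rev(w'))`; (2) there is a number `C` such that
for every `t < k` the number of designated copies of `v_t` aligned with a designated copy of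
`rev(v'_{k−t−1})` equals `C`. -/
theorem first_slip
    {A : Type*} (b e : A) (hbe : b ≠ e)
    (p q k l : ℕ) (hp0 : 0 < p) (hpq : p < q) (hcop : Nat.Coprime p q)
    (hk : 1 ≤ k) (hl : 1 < l)
    (j : ℕ → ℕ) (hj : ∀ i < q, j i < q ∧ (p * j i) % q = i % q)
    (hjq : j q = q)
    (v v' : ℕ → List A)
    (hv : ∀ i < k, (v i).length = q) (hv' : ∀ i < k, (v' i).length = q) :
    (∀ i < q, ∀ t < k, ∀ c < l - 1,
      Aligned q k l j (Cop b e q k l j v').reverse v' i t c ∨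
        (∀ x < q, InShiftedRevBoundary q k l j (copyStart q k l j i t c + x))) ∧
    (∃ C : ℕ, ∀ t < k,
      ((Finset.range q ×ˢ Finset.range (l - 1)).filter
        (fun ic : ℕ × ℕ =>
          Aligned q k l j (Cop b e q k l j v').reverse v' ic.1 t ic.2)).card = C) := by
  classical
  have hq2 : 2 ≤ q := by omega
  have hjlt : ∀ i < q, j i < q := fun i hi => (hj i hi).1
  have hje : ∀ i < q, (p * j i) % q = i % q := fun i hi => (hj i hi).2
  have hjle : ∀ i ≤ q, j i ≤ q := by
    intro i hi
    rcases eq_or_lt_of_le hi with rfl | h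
    · rw [hjq]
    · exact le_of_lt (hjlt i h)
  have hcancel : ∀ x y, x < q → y < q → (p * x) % q = (p * y) % q → x = y := by
    intro x y hx hy h
    have h' : x ≡ y [MOD q] := Nat.ModEq.cancel_left_of_coprime hcop.symm h
    rwa [Nat.ModEq, Nat.mod_eq_of_lt hx, Nat.mod_eq_of_lt hy] at h'
  have hj0 : j 0 = 0 := by
    apply hcancel _ _ (hjlt 0 (by omega)) (by omega)
    rw [Nat.mul_zero]
    exact hje 0 (by omega)
  have hjpos : ∀ i, 1 ≤ i → i < q → 1 ≤ j i := by
    intro i h1 h2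
    by_contra h
    have hz : j i = 0 := by omega
    have h3 := hje i h2
    rw [hz, Nat.mul_zero, Nat.zero_mod, Nat.mod_eq_of_lt h2] at h3
    omega
  have hj1pos : 1 ≤ j 1 := hjpos 1 le_rfl (by omega)
  have hj1lt : j 1 < q := hjlt 1 (by omega)
  have hsum : ∀ i', 1 ≤ i' → i' ≤ q → j i' + j (q - i') = q := by
    intro i' h1 h2
    rcases eq_or_lt_of_le h2 with rfl | h2'
    · rw [Nat.sub_self, hj0, hjq]; omega
    · have ha : j i' < q := hjlt i' h2'
      have hb : j (q - i') < q := hjlt _ (by omega)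
      have hs1 : 1 ≤ j i' := hjpos i' h1 h2'
      have hs2 : 1 ≤ j (q - i') := hjpos _ (by omega) (by omega)
      have hm : (p * (j i' + j (q - i'))) % q = 0 := by
        calc (p * (j i' + j (q - i'))) % q
            = (p * j i' + p * j (q - i')) % q := by rw [Nat.mul_add]
          _ = ((p * j i') % q + (p * j (q - i')) % q) % q := by rw [Nat.add_mod]
          _ = (i' % q + (q - i') % q) % q := by
              rw [hje i' h2', hje (q - i') (by omega)]
          _ = (i' + (q - i')) % q := by rw [← Nat.add_mod]
          _ = q % q := by rw [show i' + (q - i') = q from by omega]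
          _ = 0 := Nat.mod_self q
      have hdvd : q ∣ j i' + j (q - i') := by
        have hd1 : q ∣ (j i' + j (q - i')) * p := by
          rw [mul_comm]; exact Nat.dvd_of_mod_eq_zero hm
        exact (Nat.Coprime.dvd_of_dvd_mul_right hcop.symm hd1)
      obtain ⟨z, hz⟩ := hdvd
      have hz1 : z = 1 := by
        rcases z with _ | _ | z
        · rw [Nat.mul_zero] at hz; omega
        · rfl
        · exfalso
          have h4 : q * 2 ≤ q * (z + 1 + 1) := Nat.mul_le_mul_left q (by omega)
          linarith
      rw [hz1, Nat.mul_one] at hz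
      exact hz
  have hDich : ∀ i < q, j (i + 1) = j 1 + j i ∨ j (i + 1) + q = j 1 + j i := by
    intro i hi
    rcases Nat.lt_or_ge (i + 1) q with h1 | h1
    · rcases Nat.eq_zero_or_pos i with rfl | hipos
      · left; simp [hj0]
      · have hm : (p * (j 1 + j i)) % q = (p * j (i + 1)) % q := by
          calc (p * (j 1 + j i)) % q
              = (p * j 1 + p * j i) % q := by rw [Nat.mul_add]
            _ = ((p * j 1) % q + (p * j i) % q) % q := by rw [Nat.add_mod]
            _ = (1 % q + i % q) % q := by rw [hje 1 (by omega), hje i hi]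
            _ = (1 + i) % q := by rw [← Nat.add_mod]
            _ = (i + 1) % q := by rw [Nat.add_comm]
            _ = (p * j (i + 1)) % q := (hje (i + 1) h1).symm
        have hmq : (j 1 + j i) % q = (j (i + 1)) % q :=
          Nat.ModEq.cancel_left_of_coprime hcop.symm hm
        have hb1 : j (i + 1) < q := hjlt _ h1
        have hb2 : j i < q := hjlt i hi
        rcases Nat.lt_or_ge (j 1 + j i) q with hc1 | hc1
        · left
          rw [Nat.mod_eq_of_lt hc1, Nat.mod_eq_of_lt hb1] at hmq
          omega
        · right
          rw [Nat.mod_eq_sub_mod hc1, Nat.mod_eq_of_lt (by omega),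
            Nat.mod_eq_of_lt hb1] at hmq
          omega
    · have hiq : i + 1 = q := by omega
      left
      rw [hiq, hjq]
      have hs := hsum 1 le_rfl (by omega)
      rw [show i = q - 1 from by omega]
      omega
  have hlen : (Cop b e q k l j v').length = k * l * q ^ 2 :=
    cop_length b e q k l j v' (by omega) hv' (fun i hi => hjle i (le_of_lt hi))
  have hstr : ∀ i' t c', 1 ≤ i' → i' ≤ q → t < k → c' < l - 1 →
      (((Cop b e q k l j v').reverse).drop
          (revCopyStartShifted q k l j i' (t + 1) c' - j 1)).take q
        = (v' (k - t - 1)).reverse :=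
    fun i' t c' h1 h2 h3 h4 =>
      stringEq_lemma b e q k l j v' (by omega) hl hk hv' hjle hsum i' t c' h1 h2 h3 h4
  have key : ∀ i t c, i < q → t < k → c < l - 1 →
      (j (i + 1) = j 1 + j i ∨ (j (i + 1) + q = j 1 + j i ∧ 1 ≤ c)) →
      Aligned q k l j (Cop b e q k l j v').reverse v' i t c := by
    intro i t c hi ht hc hal
    have hji : j i < q := hjlt i hi
    have hji1 : j (i + 1) ≤ q := hjle (i + 1) (by omega)
    rcases hal with hE | ⟨hE, hc1⟩
    · have hpos : revCopyStartShifted q k l j (i + 1) (t + 1) c = copyStart q k l j i t c := by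
        show j 1 + (((i + 1 - 1) * k + (t + 1 - 1)) * (l * q) + (q - j (i + 1)) + c * q)
          = (i * k + t) * (l * q) + (q - j i) + c * q
        rw [Nat.add_sub_cancel, Nat.add_sub_cancel]
        have hAB : j 1 + (q - j (i + 1)) = q - j i := by omega
        linarith
      exact ⟨i + 1, c, by omega, by omega, hc, hpos, by
        rw [← hpos]; exact hstr (i + 1) t c (by omega) (by omega) ht hc⟩
    · obtain ⟨c', hc'⟩ : ∃ c', c' + 1 = c := ⟨c - 1, by omega⟩
      have hpos : revCopyStartShifted q k l j (i + 1) (t + 1) c' = copyStart q k l j i t c := by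
        show j 1 + (((i + 1 - 1) * k + (t + 1 - 1)) * (l * q) + (q - j (i + 1)) + c' * q)
          = (i * k + t) * (l * q) + (q - j i) + c * q
        rw [Nat.add_sub_cancel, Nat.add_sub_cancel]
        have hAB : j 1 + (q - j (i + 1)) = q + (q - j i) := by omega
        have hCC : c * q = c' * q + q := by rw [← hc']; ring
        linarith
      exact ⟨i + 1, c', by omega, by omega, by omega, hpos, by
        rw [← hpos]; exact hstr (i + 1) t c' (by omega) (by omega) ht (by omega)⟩
  have fwd : ∀ i t c, i < q → t < k → c < l - 1 →
      Aligned q k l j (Cop b e q k l j v').reverse v' i t c →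
      (j (i + 1) = j 1 + j i ∨ 1 ≤ c) := by
    intro i t c hi ht hc hA
    obtain ⟨i', c', h1, h2, h3, heq, -⟩ := hA
    have heq' : j 1 + (((i' - 1) * k + t) * (l * q) + (q - j i') + c' * q)
        = (i * k + t) * (l * q) + (q - j i) + c * q := by
      have h := heq
      unfold revCopyStartShifted copyStart at h
      rwa [Nat.add_sub_cancel] at h
    obtain ⟨a, ha⟩ : ∃ a, a + 1 = i' := ⟨i' - 1, by omega⟩
    rw [show i' - 1 = a from by omega] at heq'
    have hji : j i ≤ q := hjle i (le_of_lt hi)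
    have hji' : j i' ≤ q := hjle i' h2
    have hjilt : j i < q := hjlt i hi
    have hz : ∃ z : ℤ, (j 1 : ℤ) + j i - j i' = q * z := by
      refine ⟨((i : ℤ) * k * l + c) - ((a : ℤ) * k * l + c'), ?_⟩
      have h := heq'
      zify [hji, hji'] at h
      linear_combination h
    obtain ⟨z, hz⟩ := hz
    have hqz : (0 : ℤ) < (q : ℤ) := by exact_mod_cast (by omega : 0 < q)
    have hb2 : ((j 1 : ℤ) + j i - j i') > -(q : ℤ) := by
      have c1 : (1 : ℤ) ≤ (j 1 : ℤ) := by exact_mod_cast hj1pos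
      have c2 : (0 : ℤ) ≤ (j i : ℤ) := by positivity
      have c3 : ((j i' : ℤ)) ≤ (q : ℤ) := by exact_mod_cast hji'
      linarith
    have hb3 : ((j 1 : ℤ) + j i - j i') < 2 * (q : ℤ) := by
      have c1 : (j 1 : ℤ) < (q : ℤ) := by exact_mod_cast hj1lt
      have c2 : (j i : ℤ) < (q : ℤ) := by exact_mod_cast hjilt
      have c3 : (0 : ℤ) ≤ (j i' : ℤ) := by positivity
      linarith
    have hz01 : z = 0 ∨ z = 1 := by
      have hz0 : 0 ≤ z := by
        by_contra hcon
        push_neg at hcon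
        have hm : (q : ℤ) * z ≤ (q : ℤ) * (-1) :=
          mul_le_mul_of_nonneg_left (by omega) (le_of_lt hqz)
        linarith
      have hz1 : z ≤ 1 := by
        by_contra hcon
        push_neg at hcon
        have hm : (q : ℤ) * 2 ≤ (q : ℤ) * z :=
          mul_le_mul_of_nonneg_left (by omega) (le_of_lt hqz)
        linarith
      omega
    have hd : j 1 + j i = j i' ∨ j 1 + j i = j i' + q := by
      rcases hz01 with rfl | rfl
      · left; rw [mul_zero] at hz; omega
      · right; rw [mul_one] at hz; omega
    have hm2 : (p * (j 1 + j i)) % q = (1 + i) % q := by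
      calc (p * (j 1 + j i)) % q
          = (p * j 1 + p * j i) % q := by rw [Nat.mul_add]
        _ = ((p * j 1) % q + (p * j i) % q) % q := by rw [Nat.add_mod]
        _ = (1 % q + i % q) % q := by rw [hje 1 (by omega), hje i hi]
        _ = (1 + i) % q := by rw [← Nat.add_mod]
    have hiq : i' = i + 1 := by
      rcases Nat.lt_or_ge i' q with hi'q | hi'q
      · have hm1 : (p * j i') % q = i' % q := hje i' hi'q
        have hmm : i' % q = (1 + i) % q := by
          rcases hd with hd | hd
          · rw [← hm1, ← hm2, hd]
          · rw [← hm1, ← hm2]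
            have hh : p * (j 1 + j i) = p * j i' + p * q := by rw [hd]; ring
            rw [hh, Nat.add_mul_mod_self_right]
        rw [Nat.mod_eq_of_lt hi'q] at hmm
        rcases Nat.lt_or_ge (1 + i) q with h | h
        · rw [Nat.mod_eq_of_lt h] at hmm; omega
        · have hq1 : 1 + i = q := by omega
          rw [hq1, Nat.mod_self] at hmm
          omega
      · have hi'' : i' = q := by omega
        rw [hi'', hjq] at hd
        rcases hd with hd | hd
        · rw [hd] at hm2
          have hpp : (p * q) % q = 0 := Nat.mul_mod_left p q
          rw [hpp] at hm2
          rcases Nat.lt_or_ge (1 + i) q with h | h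
          · rw [Nat.mod_eq_of_lt h] at hm2; omega
          · omega
        · omega
    subst hiq
    rcases hDich i hi with hD | hD
    · left; exact hD
    · right
      have ha' : a = i := by omega
      rw [ha'] at heq'
      have hji1 : j (i + 1) ≤ q := hjle (i + 1) (by omega)
      have hAB : j 1 + (q - j (i + 1)) = q + (q - j i) := by omega
      have hC : c * q = c' * q + q := by linarith
      by_contra hcc
      have hc0 : c = 0 := by omega
      rw [hc0, Nat.zero_mul] at hC
      have := Nat.zero_le (c' * q)
      linarith
  constructor
  · intro i hi t ht c hc
    by_cases hA : j (i + 1) = j 1 + j i ∨ 1 ≤ c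
    · left
      rcases hA with hA | hA
      · exact key i t c hi ht hc (Or.inl hA)
      · rcases hDich i hi with hD | hD
        · exact key i t c hi ht hc (Or.inl hD)
        · exact key i t c hi ht hc (Or.inr ⟨hD, hA⟩)
    · right
      push_neg at hA
      obtain ⟨hA1, hA2⟩ := hA
      have hc0 : c = 0 := by omega
      subst hc0
      have hD : j (i + 1) + q = j 1 + j i := (hDich i hi).resolve_left hA1
      have hipos : 1 ≤ i := by
        by_contra h
        have hz : i = 0 := by omega
        rw [hz, hj0] at hD
        omega
      have hi1q : i + 1 < q := by
        by_contra h
        have hz : i + 1 = q := by omega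
        rw [hz, hjq] at hD
        have := hjlt i hi
        omega
      have hJlt : j (i + 1) < q := hjlt _ hi1q
      have hJpos : 1 ≤ j (i + 1) := hjpos _ (by omega) hi1q
      have hjipos : 1 ≤ j i := hjpos i hipos hi
      have hjilt : j i < q := hjlt i hi
      intro x hx
      have hmval : copyStart q k l j i t 0 + x = (i * k + t) * (l * q) + (q - j i) + x := by
        show (i * k + t) * (l * q) + (q - j i) + 0 * q + x = _
        ring
      have hBk : k ≤ i * k + t := by
        have h1 : 1 * k ≤ i * k := Nat.mul_le_mul_right _ hipos
        linarith
    
      have hB1 : (i * k + t) + 1 ≤ q * k := by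
        have h1 : (i + 1) * k ≤ q * k := Nat.mul_le_mul_right _ (by omega)
        have h2 : (i + 1) * k = i * k + k := by ring
        linarith
      have hq2q : 2 * q ≤ l * q := Nat.mul_le_mul_right _ (by omega)
      have hklq : k * (l * q) ≤ (i * k + t) * (l * q) := Nat.mul_le_mul_right _ hBk
      have hlqk : l * q ≤ k * (l * q) := Nat.le_mul_of_pos_left _ (by omega)
      have hPle : (i * k + t) * (l * q) + l * q ≤ q * k * (l * q) := by
        have h1 := Nat.mul_le_mul_right (l * q) hB1
        have h2 : ((i * k + t) + 1) * (l * q) = (i * k + t) * (l * q) + l * q := by ring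
        linarith
      have hNe : k * l * q ^ 2 = q * k * (l * q) := by ring
      have hsubji : q - j i ≤ q := Nat.sub_le _ _
      have h1 : j 1 ≤ copyStart q k l j i t 0 + x := by
        rw [hmval]; linarith
      have h2 : copyStart q k l j i t 0 + x < k * l * q ^ 2 + j 1 := by
        rw [hmval, hNe]; linarith
      refine ⟨h1, h2, ?_⟩
      have hsubm : copyStart q k l j i t 0 + x - j 1 + j 1 = copyStart q k l j i t 0 + x :=
        Nat.sub_add_cancel h1
      have hu : copyStart q k l j i t 0 + x - j 1 + j (i + 1) = (i * k + t) * (l * q) + x := by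
        have hmj : copyStart q k l j i t 0 + x + j (i + 1)
            = (i * k + t) * (l * q) + x + j 1 := by
          rw [hmval]
          have hbr : (q - j i) + j (i + 1) = j 1 := by omega
          linarith
        linarith
      rcases Nat.lt_or_ge x (j (i + 1)) with hxJ | hxJ
      · obtain ⟨off, hoff⟩ : ∃ off, off + x + 1 = j (i + 1) := ⟨j (i + 1) - x - 1, by omega⟩
        rcases Nat.eq_zero_or_pos t with rfl | htpos
        · obtain ⟨d, hdq⟩ : ∃ d, i + d = q := ⟨q - i, by omega⟩
          have hjd : j d = q - j i := by
            have hs := hsum i hipos (le_of_lt hi)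
            rw [show d = q - i from by omega]
            omega
          have hBig : (d * k + 0) * (l * q) + (i * k + 0) * (l * q) = k * l * q ^ 2 := by
            have h3 : (d * k + 0) * (l * q) + (i * k + 0) * (l * q)
                = (d + i) * k * (l * q) := by ring
            rw [h3, show d + i = q from by omega]; ring
          have hkey : k * l * q ^ 2 - 1 - (copyStart q k l j i 0 0 + x - j 1)
              = (d * k + 0) * (l * q) + off := by
            rw [Nat.sub_sub]
            apply Nat.sub_eq_of_eq_add
            linarith
          rw [hkey]
          refine boundary_mem q k l j (by omega) (by omega) (by omega) d 0 off
            (by omega) (by omega) (by linarith) ?_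
          left
          omega
        · obtain ⟨d', hd'⟩ : ∃ d', i + d' + 1 = q := ⟨q - i - 1, by omega⟩
          obtain ⟨t₃, ht₃⟩ : ∃ t₃, t + t₃ = k := ⟨k - t, by omega⟩
          have ht₃pos : 1 ≤ t₃ := by omega
          have hjd : j d' = q - j (i + 1) := by
            have hs := hsum (i + 1) (by omega) (by omega)
            rw [show d' = q - (i + 1) from by omega]
            omega
          have hBig : (d' * k + t₃) * (l * q) + (i * k + t) * (l * q) = k * l * q ^ 2 := by
            have h1' : (d' * k + t₃) + (i * k + t) = q * k := by
              have e : q * k = i * k + d' * k + k := by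
                rw [show q = i + d' + 1 from by omega]; ring
              linarith
            calc (d' * k + t₃) * (l * q) + (i * k + t) * (l * q)
                = ((d' * k + t₃) + (i * k + t)) * (l * q) := by ring
              _ = q * k * (l * q) := by rw [h1']
              _ = k * l * q ^ 2 := by ring
          have hkey : k * l * q ^ 2 - 1 - (copyStart q k l j i t 0 + x - j 1)
              = (d' * k + t₃) * (l * q) + off := by
            rw [Nat.sub_sub]
            apply Nat.sub_eq_of_eq_add
            linarith
          rw [hkey]
          refine boundary_mem q k l j (by omega) (by omega) (by omega) d' t₃ off
            (by omega) (by omega) (by linarith) ?_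
          left
          omega
      · have hx1 : x + 1 ≤ l * q + j (i + 1) := by linarith
        have hoff : (l * q + j (i + 1) - x - 1) + (x + 1) = l * q + j (i + 1) := by
          rw [Nat.sub_sub]
          exact Nat.sub_add_cancel hx1
        obtain ⟨d', hd'⟩ : ∃ d', i + d' + 1 = q := ⟨q - i - 1, by omega⟩
        obtain ⟨t₃, ht₃⟩ : ∃ t₃, t + t₃ + 1 = k := ⟨k - t - 1, by omega⟩
        have hjd : j d' = q - j (i + 1) := by
          have hs := hsum (i + 1) (by omega) (by omega)
          rw [show d' = q - (i + 1) from by omega]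
          omega
        have hlq1 : (l - 1) * q + q = l * q := by
          have h3 : ((l - 1) + 1) * q = (l - 1) * q + q := by ring
          rw [show (l - 1) + 1 = l from by omega] at h3
          omega
        have hBig : (d' * k + t₃) * (l * q) + l * q + (i * k + t) * (l * q)
            = k * l * q ^ 2 := by
          have h1' : (d' * k + t₃) + 1 + (i * k + t) = q * k := by
            have e : q * k = i * k + d' * k + k := by
              rw [show q = i + d' + 1 from by omega]; ring
            linarith
          calc (d' * k + t₃) * (l * q) + l * q + (i * k + t) * (l * q)
              = ((d' * k + t₃) + 1 + (i * k + t)) * (l * q) := by ring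
            _ = q * k * (l * q) := by rw [h1']
            _ = k * l * q ^ 2 := by ring
        have hkey : k * l * q ^ 2 - 1 - (copyStart q k l j i t 0 + x - j 1)
            = (d' * k + t₃) * (l * q) + (l * q + j (i + 1) - x - 1) := by
          rw [Nat.sub_sub]
          apply Nat.sub_eq_of_eq_add
          linarith
        rw [hkey]
        refine boundary_mem q k l j (by omega) (by omega) (by omega) d' t₃ _
          (by omega) (by omega) (by linarith) ?_
        right
        have hqd : q - j d' = j (i + 1) := by omega
        rw [hqd]
        linarith
  · refine ⟨((Finset.range q ×ˢ Finset.range (l - 1)).filter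
        (fun ic : ℕ × ℕ => j (ic.1 + 1) = j 1 + j ic.1 ∨ 1 ≤ ic.2)).card, fun t ht => ?_⟩
    congr 1
    apply Finset.filter_congr
    intro ic hic
    simp only [Finset.mem_product, Finset.mem_range] at hic
    constructor
    · intro h
      exact fwd ic.1 t ic.2 hic.1 ht hic.2 h
    · intro h
      rcases h with h | h
      · exact key ic.1 t ic.2 hic.1 ht hic.2 (Or.inl h)
      · rcases hDich ic.1 hic.1 with hD | hD
        · exact key ic.1 t ic.2 hic.1 ht hic.2 (Or.inl hD)
        · exact key ic.1 t ic.2 hic.1 ht hic.2 (Or.inr ⟨hD, h⟩)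

end Stmt5
end

section
/- One-step approximation for the circle coordinates: let k ≥ 2, l ≥ 2, q ≥ 1 and 0 ≤ p < q with gcd(p,q)=1 (p = 0 when q = 1). Set q' = k·l·q² and p' = p·q·k·l + 1. Let 0 ≤ i < q, 0 ≤ j < k, 0 ≤ l* ≤ l−2, 0 ≤ r < q, let j_i be the unique integer in [0,q) with p·j_i ≡ i (mod q), and put r' = i·(k l q) + j·(l q) + (q − j_i) + l*·q + r. Then there is a real number δ with |δ| < 2/q such that p'·r'/q' ≡ p·r/q + δ (mod 1). -/
/-!
STATEMENT 7: One-step approximation for the circle coordinates.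
-/

namespace Stmt7

set_option maxHeartbeats 1600000 in
/-- Let `k ≥ 2`, `l ≥ 2`, `q ≥ 1`, `0 ≤ p < q` with `gcd(p,q) = 1` (and `p = 0` when `q = 1`),
and set `q' = k l q²`, `p' = p q k l + 1`. For `0 ≤ i < q`, `0 ≤ jj < k`, `0 ≤ l* ≤ l − 2`,
`0 ≤ r < q`, with `j_i` the unique integer in `[0, q)` with `p·j_i ≡ i (mod q)`, and
`r' = i·(k l q) + jj·(l q) + (q − j_i) + l*·q + r`, there is a real `δ` with `|δ| < 2/q` such
that `p'·r'/q' ≡ p·r/q + δ (mod 1)`. -/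
theorem one_step_circle_coordinate_approximation
    (k l q p : ℕ) (hk : 2 ≤ k) (hl : 2 ≤ l) (hq : 1 ≤ q) (hpq : p < q)
    (hcop : Nat.Coprime p q) (hp1 : q = 1 → p = 0)
    (i jj lstar r ji : ℕ)
    (hi : i < q) (hjj : jj < k) (hlstar : lstar ≤ l - 2) (hr : r < q)
    (hji : ji < q) (hjieq : (p * ji) % q = i % q) :
    ∃ δ : ℝ, |δ| < 2 / q ∧ ∃ m : ℤ,
      (((p * q * k * l + 1 : ℕ) : ℝ) *
          ((i * (k * l * q) + jj * (l * q) + (q - ji) + lstar * q + r : ℕ) : ℝ))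
          / ((k * l * q ^ 2 : ℕ) : ℝ)
        = ((p : ℝ) * r) / q + δ + m := by
  have hq0 : (0:ℝ) < q := by exact_mod_cast hq
  have hk0 : (0:ℝ) < k := by positivity
  have hl0 : (0:ℝ) < l := by exact_mod_cast (by omega : 0 < l)
  have hkR : (2:ℝ) ≤ k := by exact_mod_cast hk
  have hlR : (2:ℝ) ≤ l := by exact_mod_cast hl
  have hden : (0:ℝ) < ((k * l * q ^ 2 : ℕ) : ℝ) := by
    push_cast; positivity
  obtain ⟨t, ht⟩ : ∃ t : ℕ, p * ji = q * t + i := by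
    refine ⟨p * ji / q, ?_⟩
    have := Nat.div_add_mod (p * ji) q
    have hi' : i % q = i := Nat.mod_eq_of_lt hi
    omega
  have htR : (p:ℝ) * ji = q * t + i := by exact_mod_cast ht
  refine ⟨((jj * (l * q) + (q - ji) + lstar * q + r : ℕ) : ℝ) / ((k * l * q ^ 2 : ℕ) : ℝ),
    ?_, (p * i * k * l + p * jj * l + p * lstar + p : ℤ) - t, ?_⟩
  · rw [abs_of_nonneg (by positivity)]
    rw [div_lt_div_iff₀ hden hq0]
    have hjjR : (jj:ℝ) ≤ (k:ℝ) - 1 := by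
      have : (jj:ℝ) + 1 ≤ k := by exact_mod_cast hjj
      linarith
    have hlsR : (lstar:ℝ) ≤ (l:ℝ) - 2 := by
      have : lstar + 2 ≤ l := by omega
      have : (lstar:ℝ) + 2 ≤ l := by exact_mod_cast this
      linarith
    have hrR : (r:ℝ) ≤ (q:ℝ) - 1 := by
      have : (r:ℝ) + 1 ≤ q := by exact_mod_cast hr
      linarith
    have hsubR : ((q - ji : ℕ) : ℝ) ≤ q := by
      exact_mod_cast Nat.sub_le q ji
    push_cast
    have e1 : (jj:ℝ) * ((l:ℝ) * q) ≤ ((k:ℝ) - 1) * ((l:ℝ) * q) :=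
      mul_le_mul_of_nonneg_right hjjR (by positivity)
    have e2 : (lstar:ℝ) * q ≤ ((l:ℝ) - 2) * q :=
      mul_le_mul_of_nonneg_right hlsR hq0.le
    have eN : (jj:ℝ) * ((l:ℝ) * q) + ((q - ji : ℕ):ℝ) + (lstar:ℝ) * q + (r:ℝ)
        ≤ (k:ℝ) * l * q - 1 := by nlinarith [e1, e2, hsubR, hrR]
    have eNq := mul_le_mul_of_nonneg_right eN hq0.le
    nlinarith [eNq, mul_pos (mul_pos hk0 hl0) (mul_pos hq0 hq0), hq0]
  · have hiR : (i:ℝ) = (p:ℝ) * ji - q * t := by linarith [htR]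
    push_cast [Nat.cast_sub hji.le]
    rw [hiR]
    field_simp
    ring

end Stmt7
end

section
/- Multiplicity of genetic markers in circular words: let (W_n) be an odometer based construction sequence with coefficients (k_n), let (k_n, l_n) be a circular coefficient sequence, and let c_n: W_n → W_n^c be the induced bijections onto the circular construction sequence. Fix n < m, v ∈ W_m, and set v^c = c_m(v). Then for every (n,m)-genetic marker ⟨j*_n, j*_{n+1}, …, j*_{m−1}⟩, the number of designated occurrences of n-subwords of v^c having that genetic marker equals ∏_{i=n}^{m−1} q_i (l_i − 1). -/
/-!
STATEMENT 9: Multiplicity of genetic markers in circular words.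
-/

namespace Stmt9

open Finset

/-- `q_0 = 1`, `q_{n+1} = k_n l_n q_n²`. -/
def qSeq (k l : ℕ → ℕ) : ℕ → ℕ
  | 0 => 1
  | n + 1 => k n * l n * (qSeq k l n) ^ 2

/-- `p_0 = 0`, `p_{n+1} = p_n q_n k_n l_n + 1`. -/
def pSeq (k l : ℕ → ℕ) : ℕ → ℕ
  | 0 => 0
  | n + 1 => pSeq k l n * qSeq k l n * k n * l n + 1

/-- `j_i = (p⁻¹ · i) mod q`. -/
def jW (p q i : ℕ) : ℕ := (((p : ZMod q))⁻¹ * (i : ZMod q)).val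

/-- In a circular word `C(w_0,…,w_{kk−1})` with parameters `q, kk, ll` (words of length `q`),
the `c`-th designated copy of the argument `w_t` within the `i`-th 2-subsection begins at
position `(i·kk + t)·(ll·q) + (q − j_i) + c·q`. -/
def blockOffset (q kk ll : ℕ) (j : ℕ → ℕ) (i t c : ℕ) : ℕ :=
  (i * kk + t) * (ll * q) + (q - j i) + c * q

/-- The set of starting positions of the designated occurrences of `n`-subwords with genetic
marker `⟨J n, J (n+1), …, J (n+d−1)⟩` inside a word of `W_{n+d}^c`; `markPos k l n J d` is
defined recursively following the circular operators `C_r` (`J r` records which of the `k_r`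
arguments of `C_r` the subword occupies at stage `r`). -/
def markPos (k l : ℕ → ℕ) (n : ℕ) (J : ℕ → ℕ) : ℕ → Finset ℕ
  | 0 => {0}
  | d + 1 =>
      (Finset.range (qSeq k l (n + d)) ×ˢ Finset.range (l (n + d) - 1)).biUnion
        fun ic => (markPos k l n J d).image fun x =>
          blockOffset (qSeq k l (n + d)) (k (n + d)) (l (n + d))
            (jW (pSeq k l (n + d)) (qSeq k l (n + d))) ic.1 (J (n + d)) ic.2 + x

lemma qSeq_pos (k l : ℕ → ℕ) (hk : ∀ n, 2 ≤ k n) (hl : ∀ n, 2 ≤ l n) :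
    ∀ n, 0 < qSeq k l n
  | 0 => Nat.one_pos
  | n + 1 => by
      have h0 := qSeq_pos k l hk hl n
      have h1 := hk n; have h2 := hl n
      simp only [qSeq]
      positivity

lemma jW_lt (p q i : ℕ) (hq : 0 < q) : jW p q i < q := by
  haveI : NeZero q := ⟨hq.ne'⟩
  exact ZMod.val_lt _

lemma markPos_lt (k l : ℕ → ℕ) (hk : ∀ n, 2 ≤ k n) (hl : ∀ n, 2 ≤ l n)
    (n : ℕ) (J : ℕ → ℕ) :
    ∀ d, (∀ r, n ≤ r → r < n + d → J r < k r) →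
      ∀ x ∈ markPos k l n J d, x < qSeq k l (n + d)
  | 0, _, x, hx => by
      simp only [markPos, Finset.mem_singleton] at hx
      subst hx
      exact qSeq_pos k l hk hl n
  | d + 1, hJ, x, hx => by
      simp only [markPos, Finset.mem_biUnion, Finset.mem_product, Finset.mem_range,
        Finset.mem_image] at hx
      obtain ⟨⟨i, c⟩, ⟨hi, hc⟩, y, hy, rfl⟩ := hx
      have hq : 0 < qSeq k l (n + d) := qSeq_pos k l hk hl (n + d)
      have hy' : y < qSeq k l (n + d) :=
        markPos_lt k l hk hl n J d (fun r h1 h2 => hJ r h1 (by omega)) y hy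
      have ht : J (n + d) < k (n + d) := hJ (n + d) (by omega) (by omega)
      set q := qSeq k l (n + d) with hqdef
      set kk := k (n + d) with hkkdef
      set ll := l (n + d) with hlldef
      have hkk := hk (n + d); have hll := hl (n + d)
      have hgoal : qSeq k l (n + d + 1) = kk * ll * q ^ 2 := by
        simp only [qSeq, hqdef, hkkdef, hlldef]
      rw [show n + (d + 1) = n + d + 1 from rfl, hgoal]
      simp only [blockOffset]
      have ha : (i + 1) * kk ≤ q * kk := Nat.mul_le_mul_right _ (by omega)
      have h1 : i * kk + J (n + d) + 1 ≤ q * kk := by nlinarith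
      have h1' : (i * kk + J (n + d)) * (ll * q) + ll * q ≤ kk * ll * q ^ 2 := by
        have := Nat.mul_le_mul_right (ll * q) h1
        nlinarith
      have h2 : c * q ≤ (ll - 2) * q := Nat.mul_le_mul_right _ (by omega)
      have h3 : (ll - 2) * q + 2 * q = ll * q := by
        rw [← add_mul]; congr 1; omega
      have h4 : q - jW (pSeq k l (n + d)) q i ≤ q := Nat.sub_le _ _
      generalize q - jW (pSeq k l (n + d)) q i = B at h4 ⊢
      generalize hL : ll * q = L at h1' ⊢
      generalize (i * kk + J (n + d)) * L = P at h1' ⊢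
      generalize kk * ll * q ^ 2 = F at h1' ⊢
      generalize (ll - 2) * q = D at h2 h3
      generalize c * q = C at h2 ⊢
      omega

lemma offset_inj (q kk ll : ℕ) (hq : 0 < q) (hkk : 2 ≤ kk) (hll : 2 ≤ ll)
    (j : ℕ → ℕ) (hj : ∀ i, j i < q) (t i1 i2 c1 c2 x1 x2 : ℕ)
    (hc1 : c1 < ll - 1) (hc2 : c2 < ll - 1) (hx1 : x1 < q) (hx2 : x2 < q)
    (h : blockOffset q kk ll j i1 t c1 + x1 = blockOffset q kk ll j i2 t c2 + x2) :
    i1 = i2 ∧ c1 = c2 ∧ x1 = x2 := by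
  have key : ∀ a b ca cb xa xb : ℕ, ca < ll - 1 → xa < q → a < b →
      blockOffset q kk ll j a t ca + xa ≠ blockOffset q kk ll j b t cb + xb := by
    intro a b ca cb xa xb hca hxa hab hEq
    simp only [blockOffset] at hEq
    have ha : (a + 1) * kk ≤ b * kk := Nat.mul_le_mul_right _ (by omega)
    have hA0 : a * kk + t + kk ≤ b * kk + t := by nlinarith
    have hA : (a * kk + t) * (ll * q) + kk * (ll * q) ≤ (b * kk + t) * (ll * q) := by
      have := Nat.mul_le_mul_right (ll * q) hA0
      nlinarith
    have h2 : ca * q ≤ (ll - 2) * q := Nat.mul_le_mul_right _ (by omega)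
    have h3 : (ll - 2) * q + 2 * q = ll * q := by
      rw [← add_mul]; congr 1; omega
    have h4 : q - j a ≤ q := Nat.sub_le _ _
    have h5 : 1 ≤ q - j b := by have := hj b; omega
    have h6 : 2 * (ll * q) ≤ kk * (ll * q) := Nat.mul_le_mul_right _ hkk
    have hq' : 0 < ll * q := by positivity
    clear hc1 hc2 hx1 hx2 h hca hab ha hA0 hj
    generalize q - j a = Ba at h4 hEq
    generalize q - j b = Bb at h5 hEq
    generalize hL : ll * q = L at hA h6 hq' h3 hEq
    generalize (a * kk + t) * L = PA at hA hEq
    generalize (b * kk + t) * L = PB at hA hEq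
    generalize kk * L = K at hA h6
    generalize (ll - 2) * q = D at h2 h3
    generalize ca * q = Ca at h2 hEq
    generalize cb * q = Cb at hEq
    omega
  rcases lt_trichotomy i1 i2 with h12 | h12 | h12
  · exact absurd h (key _ _ _ _ _ _ hc1 hx1 h12)
  · subst h12
    simp only [blockOffset] at h
    have hcx : c1 * q + x1 = c2 * q + x2 := by
      generalize (i1 * kk + t) * (ll * q) = P at h
      generalize q - j i1 = B at h
      omega
    have hx : x1 = x2 := by
      have e1 : (c1 * q + x1) % q = x1 := by
        rw [add_comm, Nat.add_mul_mod_self_right, Nat.mod_eq_of_lt hx1]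
      have e2 : (c2 * q + x2) % q = x2 := by
        rw [add_comm, Nat.add_mul_mod_self_right, Nat.mod_eq_of_lt hx2]
      rw [← e1, ← e2, hcx]
    have hc : c1 = c2 := by
      have hcq : c1 * q = c2 * q := by omega
      exact Nat.eq_of_mul_eq_mul_right hq hcq
    exact ⟨rfl, hc, hx⟩
  · exact absurd h.symm (key _ _ _ _ _ _ hc2 hx2 h12)

lemma markPos_card (k l : ℕ → ℕ) (hk : ∀ n, 2 ≤ k n) (hl : ∀ n, 2 ≤ l n)
    (n : ℕ) (J : ℕ → ℕ) :
    ∀ d, (∀ r, n ≤ r → r < n + d → J r < k r) →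
      (markPos k l n J d).card
        = ∏ i ∈ Finset.range d, qSeq k l (n + i) * (l (n + i) - 1)
  | 0, _ => by simp [markPos]
  | d + 1, hJ => by
      have hJ' : ∀ r, n ≤ r → r < n + d → J r < k r := fun r h1 h2 => hJ r h1 (by omega)
      have ih := markPos_card k l hk hl n J d hJ'
      have hq : 0 < qSeq k l (n + d) := qSeq_pos k l hk hl (n + d)
      have hjlt : ∀ i, jW (pSeq k l (n + d)) (qSeq k l (n + d)) i < qSeq k l (n + d) :=
        fun i => jW_lt _ _ _ hq
      have hxlt : ∀ x ∈ markPos k l n J d, x < qSeq k l (n + d) :=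
        markPos_lt k l hk hl n J d hJ'
      have hdisj : ∀ p1 ∈ Finset.range (qSeq k l (n + d)) ×ˢ Finset.range (l (n + d) - 1),
          ∀ p2 ∈ Finset.range (qSeq k l (n + d)) ×ˢ Finset.range (l (n + d) - 1), p1 ≠ p2 →
          Disjoint
            ((markPos k l n J d).image fun x =>
              blockOffset (qSeq k l (n + d)) (k (n + d)) (l (n + d))
                (jW (pSeq k l (n + d)) (qSeq k l (n + d))) p1.1 (J (n + d)) p1.2 + x)
            ((markPos k l n J d).image fun x =>
              blockOffset (qSeq k l (n + d)) (k (n + d)) (l (n + d))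
                (jW (pSeq k l (n + d)) (qSeq k l (n + d))) p2.1 (J (n + d)) p2.2 + x) := by
        intro p1 hp1 p2 hp2 hne
        simp only [Finset.mem_product, Finset.mem_range] at hp1 hp2
        rw [Finset.disjoint_left]
        rintro a ha hb
        simp only [Finset.mem_image] at ha hb
        obtain ⟨x1, hx1, hax1⟩ := ha
        obtain ⟨x2, hx2, hax2⟩ := hb
        have heq := hax1.trans hax2.symm
        obtain ⟨hieq, hceq, -⟩ := offset_inj (qSeq k l (n + d)) (k (n + d)) (l (n + d))
          hq (hk _) (hl _) _ hjlt (J (n + d)) p1.1 p2.1 p1.2 p2.2 x1 x2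
          hp1.2 hp2.2 (hxlt x1 hx1) (hxlt x2 hx2) heq
        exact hne (Prod.ext hieq hceq)
      have hunfold : markPos k l n J (d + 1)
          = (Finset.range (qSeq k l (n + d)) ×ˢ Finset.range (l (n + d) - 1)).biUnion
              (fun ic => (markPos k l n J d).image fun x =>
                blockOffset (qSeq k l (n + d)) (k (n + d)) (l (n + d))
                  (jW (pSeq k l (n + d)) (qSeq k l (n + d))) ic.1 (J (n + d)) ic.2 + x) := rfl
      rw [hunfold, Finset.card_biUnion hdisj]
      have hcard : ∀ ic : ℕ × ℕ,
          ((markPos k l n J d).image fun x =>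
            blockOffset (qSeq k l (n + d)) (k (n + d)) (l (n + d))
              (jW (pSeq k l (n + d)) (qSeq k l (n + d))) ic.1 (J (n + d)) ic.2 + x).card
          = (markPos k l n J d).card := fun ic =>
        Finset.card_image_of_injective _ (fun x y hxy => Nat.add_left_cancel hxy)
      rw [Finset.sum_congr rfl (fun ic _ => hcard ic), Finset.sum_const,
        Finset.card_product, Finset.card_range, Finset.card_range, ih,
        Finset.prod_range_succ]
      ring

/-- Multiplicity of genetic markers: for `n < m` and an `(n,m)`-genetic marker
`⟨J n, …, J (m−1)⟩` (so `J r < k_r` for `n ≤ r < m`), the number of designated occurrences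
of `n`-subwords of a word of `W_m^c` having that genetic marker equals
`∏_{i=n}^{m−1} q_i (l_i − 1)`. -/
theorem genetic_marker_multiplicity
    (k l : ℕ → ℕ) (hk : ∀ n, 2 ≤ k n) (hl : ∀ n, 2 ≤ l n)
    (hsum : Summable fun n => (1 : ℝ) / l n)
    (n m : ℕ) (hnm : n < m)
    (J : ℕ → ℕ) (hJ : ∀ r, n ≤ r → r < m → J r < k r) :
    (markPos k l n J (m - n)).card = ∏ i ∈ Finset.Ico n m, qSeq k l i * (l i - 1) := by
  have h := markPos_card k l hk hl n J (m - n) (fun r h1 h2 => hJ r h1 (by omega))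
  rw [h, Finset.prod_Ico_eq_prod_range]

end Stmt9
end

section
/- Existence of principal blocks almost everywhere: let (W_n) be a construction sequence over a finite alphabet with associated symbolic system 𝕂, and let ν be a shift-invariant Borel probability measure on 𝕂 with ν(S) = 1. Then for ν-almost every s there is N such that for all n > N there exist integers a_n ≤ 0 < b_n with s↾[a_n, b_n) ∈ W_n. -/
/-!
STATEMENT 13: Existence of principal blocks almost everywhere.
-/

namespace Stmt13

open MeasureTheory

/-- The shift on `A^ℤ`. -/
def sh {A : Type*} (x : ℤ → A) : ℤ → A := fun n => x (n + 1)

/-- The finite contiguous subword of `x` on `[a, a + len)`. -/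
def subword {A : Type*} (x : ℤ → A) (a : ℤ) (len : ℕ) : List A :=
  (List.range len).map fun t => x (a + t)

/-- Unique readability. -/
def UniquelyReadable {A : Type*} (W : Set (List A)) : Prop :=
  ∀ u ∈ W, ∀ v ∈ W, ∀ w ∈ W, ∀ α β : List A, u ++ v = α ++ w ++ β → α = [] ∨ β = []

/-- Alternating concatenation `u_0 w_0 u_1 w_1 ⋯ w_J u_{J+1}`
(`joinAlt [u_0,…,u_{J+1}] [w_0,…,w_J]`). -/
def joinAlt {A : Type*} : List (List A) → List (List A) → List A
  | [], _ => []
  | u :: _, [] => u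
  | u :: us, v :: ws => u ++ v ++ joinAlt us ws

/-- The symbolic system `𝕂` associated with `W`. -/
def Kset {A : Type*} (W : ℕ → Set (List A)) : Set (ℤ → A) :=
  {x | ∀ (a : ℤ) (len : ℕ), ∃ n, ∃ w ∈ W n, subword x a len <:+: w}

/-- The set `S ⊆ 𝕂` of doubly-parsed points. -/
def Sset {A : Type*} (W : ℕ → Set (List A)) : Set (ℤ → A) :=
  {x | x ∈ Kset W ∧ ∃ a b : ℕ → ℕ,
    Filter.Tendsto a Filter.atTop Filter.atTop ∧
    Filter.Tendsto b Filter.atTop Filter.atTop ∧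
    ∀ m, ∃ n, subword x (-(a m : ℤ)) (a m + b m) ∈ W n}

/-!
Let `P n` be the set of points whose coordinate `0` lies in an occurrence of a `W_n`-word. A point
of `P (n + 1) \ P n` sees position `0` on a spacer of its `W_{n+1}`-word. Every `W_{n+1}`-word has
fewer than `ε_{n+1} q_{n+1}` spacer positions; as the `W_{n+1}`-words around the positions of
`[0, q_{n+1})` all meet this interval, a covering argument bounds the number of `k < q_{n+1}` with
`sh^k x ∈ P (n + 1) \ P n` by `2 ε_{n+1} q_{n+1}`.
Averaging over the shift, which preserves `ν`, gives `ν (P (n + 1) \ P n) ≤ 2 ε_{n+1}`. By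
Borel–Cantelli, almost every point lies in `P (n + 1) \ P n` for only finitely many `n`; a point of
`S` lies in `P n` for infinitely many `n`, so it lies in `P n` for all large `n`.
-/

open Filter Finset
open scoped Classical ENNReal

theorem card_le_two_mul_of_forall_exists_covering {α : Type*} [LinearOrder α] (B : Finset α)
    (C : ℕ) (h : ∀ p ∈ B, ∃ I : Finset α, #I ≤ C ∧ ({k ∈ B | k ≤ p} ⊆ I ∨ {k ∈ B | p ≤ k} ⊆ I)) :
    #B ≤ 2 * C := by
  -- `L` is covered by the set of its largest point, `B \ L` by the set of its smallest one.
  set L := {p ∈ B | ∃ I : Finset α, #I ≤ C ∧ {k ∈ B | k ≤ p} ⊆ I}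
  have hL : #L ≤ C := by
    rcases L.eq_empty_or_nonempty with hL | hL
    · simp [hL]
    obtain ⟨I, hI, hlow⟩ := (mem_filter.1 (L.max'_mem hL)).2
    refine (card_le_card fun k hk => hlow ?_).trans hI
    exact mem_filter.2 ⟨(mem_filter.1 hk).1, L.le_max' k hk⟩
  have hR : #(B \ L) ≤ C := by
    rcases (B \ L).eq_empty_or_nonempty with hR | hR
    · simp [hR]
    obtain ⟨hpB, hpL⟩ := mem_sdiff.1 ((B \ L).min'_mem hR)
    obtain ⟨I, hI, hlow | hup⟩ := h _ hpB
    · exact absurd (mem_filter.2 ⟨hpB, I, hI, hlow⟩) hpL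
    refine (card_le_card fun k hk => hup ?_).trans hI
    exact mem_filter.2 ⟨(mem_sdiff.1 hk).1, (B \ L).min'_le k hk⟩
  have hsplit : #(B \ L) + #L = #B := card_sdiff_add_card_eq_card (filter_subset _ _)
  omega

theorem natCast_mul_measure_le_of_card_iterate_mem_le {α : Type*} [MeasurableSpace α]
    {μ : Measure α} {f : α → α} (hf : MeasurePreserving f μ μ) {s : Set α}
    (hs : MeasurableSet s) {n : ℕ} {m : ℝ≥0∞}
    (hm : ∀ x, (#{k ∈ range n | f^[k] x ∈ s} : ℝ≥0∞) ≤ m) :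
    n * μ s ≤ m * μ Set.univ := by
  have hpre : ∀ k, MeasurableSet (f^[k] ⁻¹' s) := fun k => (hf.iterate k).measurable hs
  calc (n : ℝ≥0∞) * μ s = ∑ k ∈ range n, μ (f^[k] ⁻¹' s) := by
        simp [(hf.iterate _).measure_preimage hs.nullMeasurableSet]
    _ = ∫⁻ x, ∑ k ∈ range n, (f^[k] ⁻¹' s).indicator 1 x ∂μ := by
        rw [lintegral_finsetSum _ fun k _ => measurable_one.indicator (hpre k)]
        simp only [lintegral_indicator_one (hpre _)]
    _ = ∫⁻ x, (#{k ∈ range n | f^[k] x ∈ s} : ℝ≥0∞) ∂μ := by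
        simp only [Set.indicator_apply, Set.mem_preimage, Pi.one_apply, sum_boole]
    _ ≤ ∫⁻ _, m ∂μ := lintegral_mono hm
    _ = m * μ Set.univ := lintegral_const m

theorem eventually_of_frequently_of_eventually_succ_imp {p : ℕ → Prop}
    (hfreq : ∃ᶠ n in atTop, p n) (hstep : ∀ᶠ n in atTop, p (n + 1) → p n) :
    ∀ᶠ n in atTop, p n := by
  obtain ⟨N, hN⟩ := eventually_atTop.1 hstep
  filter_upwards [eventually_ge_atTop N] with n hn
  obtain ⟨m, hnm, hm⟩ := frequently_atTop.1 hfreq n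
  exact Nat.decreasingInduction (motive := fun k _ => n ≤ k → p k)
    (fun k _ ih hk => hN k (hn.trans hk) (ih (by omega))) (fun _ => hm) hnm le_rfl

lemma ae_of_ae_imp_of_measure_eq_one {α : Type*} [MeasurableSpace α] {μ : Measure α}
    [IsProbabilityMeasure μ] {s : Set α} {p : α → Prop} (hp : MeasurableSet {x | p x})
    (hs : μ s = 1) (h : ∀ᵐ x ∂μ, x ∈ s → p x) : ∀ᵐ x ∂μ, p x := by
  rw [ae_iff_measure_eq hp.nullMeasurableSet, measure_univ]
  exact le_antisymm prob_le_one (hs ▸ measure_mono_ae h)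

section Words

variable {A : Type*}

lemma subword_eq_map (x : ℤ → A) (a : ℤ) (len : ℕ) :
    subword x a len = (List.range len).map fun t : ℕ => x (a + t) := by
  induction len with
  | zero => rfl
  | succ n ih => simp_all [subword, List.range_succ]

lemma subword_length (x : ℤ → A) (a : ℤ) (len : ℕ) : (subword x a len).length = len := by
  simp [subword_eq_map]

lemma subword_add (x : ℤ → A) (a : ℤ) (l₁ l₂ : ℕ) :
    subword x a (l₁ + l₂) = subword x a l₁ ++ subword x (a + l₁) l₂ := by
  simp only [subword_eq_map, List.range_add, List.map_append, List.map_map]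
  congr 1
  refine List.map_congr_left fun t _ => ?_
  simp [add_assoc]

lemma subword_eq_of_eq_append {x : ℤ → A} {s : ℤ} {α v γ : List A}
    (h : subword x s (α ++ v ++ γ).length = α ++ v ++ γ) :
    subword x (s + α.length) v.length = v := by
  rw [List.length_append, List.length_append, subword_add, subword_add, List.append_assoc,
    List.append_assoc] at h
  have hα := List.append_inj h (subword_length ..)
  exact (List.append_inj hα.2 (subword_length ..)).1

def CoveredBy (V : Set (List A)) (w : List A) (t : ℕ) : Prop :=
  ∃ α v γ, v ∈ V ∧ w = α ++ v ++ γ ∧ α.length ≤ t ∧ t < α.length + v.length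

lemma CoveredBy.append_left {V : Set (List A)} {w : List A} {t : ℕ} (h : CoveredBy V w t)
    (u : List A) : CoveredBy V (u ++ w) (t + u.length) := by
  obtain ⟨α, v, γ, hv, rfl, h₁, h₂⟩ := h
  exact ⟨u ++ α, v, γ, hv, by simp, by simp; omega, by simp; omega⟩

lemma card_not_coveredBy_joinAlt_le (V : Set (List A)) (us ws : List (List A))
    (hws : ∀ v ∈ ws, v ∈ V) :
    #{t ∈ range (joinAlt us ws).length | ¬CoveredBy V (joinAlt us ws) t} ≤
      (us.map List.length).sum := by
  induction us, ws using joinAlt.induct with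
  | case1 | case2 => exact (card_filter_le _ _).trans (by simp [joinAlt])
  | case3 u us v ws ih =>
    set w := joinAlt us ws
    have hsplit : {t ∈ range (u ++ v ++ w).length | ¬CoveredBy V (u ++ v ++ w) t} ⊆
        range u.length ∪ {t ∈ range w.length | ¬CoveredBy V w t}.image
          (· + (u ++ v).length) := by
      intro t ht
      simp only [mem_filter, mem_range, List.length_append] at ht
      simp only [mem_union, mem_range, mem_image, mem_filter, List.length_append]
      by_cases htu : t < u.length
      · exact .inl htu
      by_cases htv : t < u.length + v.length
      · exact absurd ⟨u, v, w, hws v (by simp), rfl, by omega, htv⟩ ht.2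
      refine .inr ⟨t - (u.length + v.length), ⟨by omega, fun hc => ht.2 ?_⟩, by omega⟩
      simpa [Nat.sub_add_cancel (not_lt.1 htv)] using hc.append_left (u ++ v)
    calc _ ≤ #(range u.length) + #({t ∈ range w.length | ¬CoveredBy V w t}.image
          (· + (u ++ v).length)) := (card_le_card hsplit).trans (card_union_le _ _)
      _ ≤ u.length + (us.map List.length).sum := by
          grw [card_range, card_image_le, ih fun v' hv' => hws v' (by simp [hv'])]
      _ = ((u :: us).map List.length).sum := by simp

end Words

section Blocks

variable {A : Type*}

def BlockAt (V : Set (List A)) (q : ℕ) (x : ℤ → A) (k : ℤ) : Prop :=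
  ∃ r : ℕ, r < q ∧ subword x (k - r) q ∈ V

lemma blockAt_of_coveredBy {V : Set (List A)} {q Q : ℕ} (hV : ∀ v ∈ V, v.length = q)
    {x : ℤ → A} {s : ℤ} {t : ℕ} (h : CoveredBy V (subword x s Q) t) : BlockAt V q x (s + t) := by
  obtain ⟨α, v, γ, hv, heq, h₁, h₂⟩ := h
  obtain rfl : Q = (α ++ v ++ γ).length := by rw [← heq, subword_length]
  have hocc := subword_eq_of_eq_append heq
  refine ⟨t - α.length, by grind, ?_⟩
  rw [show s + t - ((t - α.length : ℕ) : ℤ) = s + α.length by omega, ← hV v hv, hocc]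
  exact hv

lemma card_le_card_not_coveredBy {V : Set (List A)} {q Q : ℕ} (hV : ∀ v ∈ V, v.length = q)
    {x : ℤ → A} {s : ℤ} {K : Finset ℕ}
    (hK : ∀ k ∈ K, s ≤ k ∧ (k : ℤ) < s + Q ∧ ¬BlockAt V q x k) :
    #K ≤ #{t ∈ range Q | ¬CoveredBy V (subword x s Q) t} := by
  refine card_le_card_of_injOn (fun k => ((k : ℤ) - s).toNat) (fun k hk => ?_) ?_
  · obtain ⟨h₁, h₂, hk⟩ := hK k hk
    have ht : ((k : ℤ) - s).toNat < Q := by omega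
    refine mem_filter.2 ⟨mem_range.2 ht, fun hc => hk ?_⟩
    simpa [Int.toNat_of_nonneg (sub_nonneg.2 h₁)] using blockAt_of_coveredBy hV hc
  · intro k hk k' hk' hkk
    have := (hK k hk).1
    have := (hK k' hk').1
    simp only at hkk
    omega

lemma sh_iterate_apply (x : ℤ → A) (k : ℕ) (t : ℤ) : (sh^[k] x) t = x (t + k) := by
  induction k generalizing x with
  | zero => simp
  | succ k ih => simp [Function.iterate_succ_apply, ih, sh, add_assoc]

lemma blockAt_sh_iterate (V : Set (List A)) (q : ℕ) (x : ℤ → A) (k : ℕ) (j : ℤ) :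
    BlockAt V q (sh^[k] x) j ↔ BlockAt V q x (j + k) := by
  have hsubword : ∀ a, subword (sh^[k] x) a q = subword x (a + k) q := fun a => by
    simp only [subword_eq_map, sh_iterate_apply, add_right_comm]
  simp only [BlockAt, hsubword, sub_add_eq_add_sub]

lemma measurable_sh [MeasurableSpace A] : Measurable (sh : (ℤ → A) → ℤ → A) :=
  measurable_pi_lambda _ fun _ => measurable_pi_apply _

lemma measurableSet_setOf_blockAt [Finite A] [MeasurableSpace A] [MeasurableSingletonClass A]
    (V : Set (List A)) (q : ℕ) (k : ℤ) : MeasurableSet {x : ℤ → A | BlockAt V q x k} := by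
  have hsubword : ∀ a, MeasurableSet {x : ℤ → A | subword x a q ∈ V} := fun a => by
    have : {x : ℤ → A | subword x a q ∈ V} =
        (fun x (t : Fin q) => x (a + t)) ⁻¹' {v | List.ofFn v ∈ V} := by
      refine Set.ext fun x => iff_of_eq (congrArg (· ∈ V) ?_)
      exact List.ext_getElem (by simp [subword_length]) fun i _ _ => by simp [subword_eq_map]
    rw [this]
    exact (measurable_pi_lambda _ fun _ => measurable_pi_apply _) (Set.toFinite _).measurableSet
  have : {x : ℤ → A | BlockAt V q x k} = ⋃ r : Fin q, {x | subword x (k - r) q ∈ V} := by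
    ext
    simp [BlockAt, Fin.exists_iff]
  rw [this]
  exact .iUnion fun _ => hsubword _

lemma card_new_blockAt_le {V V' : Set (List A)} {q Q C : ℕ} (hV : ∀ v ∈ V, v.length = q)
    (hparse : ∀ w ∈ V', ∃ us ws : List (List A), (∀ v ∈ ws, v ∈ V) ∧ w = joinAlt us ws ∧
      (us.map List.length).sum ≤ C) (x : ℤ → A) :
    #((range Q).filter fun k : ℕ => BlockAt V' Q x k ∧ ¬BlockAt V q x k) ≤ 2 * C := by
  set B := (range Q).filter fun k : ℕ => BlockAt V' Q x k ∧ ¬BlockAt V q x k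
  refine card_le_two_mul_of_forall_exists_covering B C fun p hp => ?_
  obtain ⟨hpQ, ⟨r, hr, hw⟩, -⟩ : p < Q ∧ BlockAt V' Q x p ∧ _ := by simpa [B] using hp
  obtain ⟨us, ws, hws, hjoin, hC⟩ := hparse _ hw
  refine ⟨{k ∈ B | (p - r : ℤ) ≤ k ∧ (k : ℤ) < p - r + Q}, ?_, ?_⟩
  · have hspacers := card_not_coveredBy_joinAlt_le V us ws hws
    rw [← hjoin, subword_length] at hspacers
    refine (card_le_card_not_coveredBy hV fun k hk => ?_).trans (hspacers.trans hC)
    simp only [B, mem_filter] at hk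
    exact ⟨hk.2.1, hk.2.2, hk.1.2.2⟩
  · -- The window `[p - r, p - r + Q)` holds all of `B` below `p` or all of `B` above `p`.
    by_cases hs : (p - r : ℤ) ≤ 0
    · refine .inl fun k hk => ?_
      simp only [B, mem_filter, mem_range] at hk ⊢
      exact ⟨hk.1, by omega, by omega⟩
    · refine .inr fun k hk => ?_
      simp only [B, mem_filter, mem_range] at hk ⊢
      exact ⟨hk.1, by omega, by omega⟩

lemma measure_new_blockAt_le [Finite A] [MeasurableSpace A]
    [MeasurableSingletonClass A] {ν : Measure (ℤ → A)} [IsProbabilityMeasure ν]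
    (hν : MeasurePreserving sh ν ν) {V V' : Set (List A)} {q Q : ℕ} {δ : ℝ} (hδ : 0 ≤ δ)
    (hV : ∀ v ∈ V, v.length = q)
    (hparse : ∀ w ∈ V', ∃ us ws : List (List A), (∀ v ∈ ws, v ∈ V) ∧ w = joinAlt us ws ∧
      ((us.map List.length).sum : ℝ) ≤ δ * Q) :
    ν ({x | BlockAt V' Q x 0} \ {x | BlockAt V q x 0}) ≤ ENNReal.ofReal (2 * δ) := by
  rcases Q.eq_zero_or_pos with rfl | hQ
  · simp [BlockAt]
  set C := ⌊δ * Q⌋₊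
  have hparse' : ∀ w ∈ V', ∃ us ws : List (List A), (∀ v ∈ ws, v ∈ V) ∧ w = joinAlt us ws ∧
      (us.map List.length).sum ≤ C := fun w hw => by
    obtain ⟨us, ws, hws, hjoin, hsum⟩ := hparse w hw
    exact ⟨us, ws, hws, hjoin, Nat.le_floor hsum⟩
  have hmain := natCast_mul_measure_le_of_card_iterate_mem_le (n := Q) (m := (2 * C : ℕ)) hν
    ((measurableSet_setOf_blockAt V' Q 0).diff (measurableSet_setOf_blockAt V q 0)) fun x => by
      simp only [Set.mem_sdiff, Set.mem_ofPred_eq, blockAt_sh_iterate, zero_add]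
      exact Nat.cast_le.2 ((card_le_card fun k hk => by simpa using hk).trans
        (card_new_blockAt_le hV hparse' x))
  have hC : ((2 * C : ℕ) : ℝ≥0∞) ≤ Q * ENNReal.ofReal (2 * δ) := by
    rw [← ENNReal.ofReal_natCast, ← ENNReal.ofReal_natCast Q, ← ENNReal.ofReal_mul (by positivity)]
    gcongr
    have := Nat.floor_le (a := δ * Q) (by positivity)
    push_cast
    linarith
  rw [measure_univ, mul_one] at hmain
  exact (ENNReal.mul_le_mul_iff_right (by exact_mod_cast hQ.ne') (by simp)).1 (hmain.trans hC)

lemma frequently_blockAt_zero_of_mem_Sset {W : ℕ → Set (List A)} {q : ℕ → ℕ}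
    (hlen : ∀ n, ∀ w ∈ W n, w.length = q n) {x : ℤ → A} (hx : x ∈ Sset W) :
    ∃ᶠ n in atTop, BlockAt (W n) (q n) x 0 := by
  obtain ⟨-, a, b, ha, hb, hw⟩ := hx
  refine frequently_atTop.2 fun N => ?_
  obtain ⟨m, ham, hbm⟩ :=
    ((ha.eventually_gt_atTop ((range N).sup q)).and (hb.eventually_gt_atTop 0)).exists
  obtain ⟨n, hn⟩ := hw m
  have hqn : q n = a m + b m := by rw [← hlen n _ hn, subword_length]
  have hNn : N ≤ n := by
    by_contra h
    have := le_sup (f := q) (mem_range.2 (not_le.1 h))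
    omega
  exact ⟨n, hNn, a m, by omega, by rwa [hqn, zero_sub]⟩

end Blocks

theorem principal_blocks_exist_ae_general
    {A : Type*} [Fintype A] [MeasurableSpace A] [MeasurableSingletonClass A]
    (W : ℕ → Set (List A)) (qseq : ℕ → ℕ)
    (hlen : ∀ n, ∀ w ∈ W n, w.length = qseq n)
    (ε : ℕ → ℝ) (hε : ∀ n, 0 < ε n) (hεsum : Summable ε)
    (hparse : ∀ n, ∀ w ∈ W (n + 1), ∃ us ws : List (List A),
      us.length = ws.length + 1 ∧ (∀ v ∈ ws, v ∈ W n) ∧ w = joinAlt us ws ∧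
      ((us.map List.length).sum : ℝ) < ε (n + 1) * qseq (n + 1))
    (ν : Measure (ℤ → A)) [IsProbabilityMeasure ν]
    (hinv : Measure.map (sh (A := A)) ν = ν)
    (hS : ν (Sset W) = 1) :
    ∀ᵐ s ∂ν, ∃ N : ℕ, ∀ n, N < n →
      ∃ r : ℕ, r < qseq n ∧ subword s (-(r : ℤ)) (qseq n) ∈ W n := by
  set P : ℕ → Set (ℤ → A) := fun n => {x | BlockAt (W n) (qseq n) x 0}
  have hnew : ∀ n, ν (P (n + 1) \ P n) ≤ ENNReal.ofReal (2 * ε (n + 1)) := fun n =>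
    measure_new_blockAt_le ⟨measurable_sh, hinv⟩ (hε _).le (hlen n) fun w hw => by
      obtain ⟨us, ws, -, hws, hjoin, hsum⟩ := hparse n w hw
      exact ⟨us, ws, hws, hjoin, hsum.le⟩
  have hsum : ∑' n, ν (P (n + 1) \ P n) ≠ ⊤ := by
    refine ne_top_of_le_ne_top ?_ (ENNReal.tsum_le_tsum hnew)
    rw [← ENNReal.ofReal_tsum_of_nonneg (fun n => by linarith [hε (n + 1)])
      (((summable_nat_add_iff 1).2 hεsum).mul_left 2)]
    exact ENNReal.ofReal_ne_top
  have hgood : MeasurableSet {x | ∃ N : ℕ, ∀ n, N < n → x ∈ P n} := by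
    simp only [Set.ofPred_exists, Set.ofPred_forall]
    exact .iUnion fun _ => .iInter fun n => .iInter fun _ => measurableSet_setOf_blockAt _ _ _
  refine (ae_of_ae_imp_of_measure_eq_one hgood hS ?_).mono fun x ⟨N, hN⟩ =>
    ⟨N, fun n hn => by simpa [P, BlockAt] using hN n hn⟩
  filter_upwards [ae_eventually_notMem hsum] with x hx hxS
  obtain ⟨N, hN⟩ := eventually_atTop.1 <| eventually_of_frequently_of_eventually_succ_imp
    (frequently_blockAt_zero_of_mem_Sset hlen hxS)
    (hx.mono fun n hn h => not_not.1 fun h' => hn ⟨h, h'⟩)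
  exact ⟨N, fun n hn => hN n hn.le⟩

/-- Existence of principal blocks a.e.: let `(W_n)` be a construction sequence over a finite
alphabet (words of `W_n` of length `q_n`, each word of `W_n` occurring in each word of
`W_{n+1}`, each `W_n` uniquely readable, each word of `W_{n+1}` parsing into `W_n`-words and
spacers of summable relative total length `< ε_{n+1}`), and let `ν` be a shift-invariant
Borel probability measure on `𝕂` with `ν(S) = 1`. Then for `ν`-a.e. `s` there is `N` such
that for all `n > N` there are `a_n ≤ 0 < b_n` with `s↾[a_n, b_n) ∈ W_n`. -/
theorem principal_blocks_exist_ae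
    {A : Type*} [Fintype A] [MeasurableSpace A] [MeasurableSingletonClass A]
    (W : ℕ → Set (List A)) (qseq : ℕ → ℕ)
    (hlen : ∀ n, ∀ w ∈ W n, w.length = qseq n)
    (hsub : ∀ n, ∀ w ∈ W n, ∀ w' ∈ W (n + 1), w <:+: w')
    (hUR : ∀ n, UniquelyReadable (W n))
    (ε : ℕ → ℝ) (hε : ∀ n, 0 < ε n) (hεsum : Summable ε)
    (hparse : ∀ n, ∀ w ∈ W (n + 1), ∃ us ws : List (List A),
      us.length = ws.length + 1 ∧ (∀ v ∈ ws, v ∈ W n) ∧ w = joinAlt us ws ∧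
      ((us.map List.length).sum : ℝ) < ε (n + 1) * qseq (n + 1))
    (ν : Measure (ℤ → A)) [IsProbabilityMeasure ν]
    (hinv : Measure.map (sh (A := A)) ν = ν)
    (hS : ν (Sset W) = 1) :
    ∀ᵐ s ∂ν, ∃ N : ℕ, ∀ n, N < n →
      ∃ r : ℕ, r < qseq n ∧ subword s (-(r : ℤ)) (qseq n) ∈ W n :=
  principal_blocks_exist_ae_general W qseq hlen ε hε hεsum hparse ν hinv hS

end Stmt13
end

section
/- Convergence of a summable sequence of stationary codes: let Σ be a finite alphabet, ν a shift-invariant Borel probability measure on Σ^ℤ, and (Λ_i) a sequence of codes (of possibly varying lengths) such that Σ_i d(Λ_i, Λ_{i+1}) < ∞. Then for ν-almost every s and every k ∈ ℤ, the sequence (Λ̄_i(s)(k))_i is eventually constant; hence the a.e.-defined pointwise limit map S(s) = lim_i Λ̄_i(s) exists ν-a.e., and S(sh(s)) = sh(S(s)) for ν-almost every s. -/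
/-!
STATEMENT 15: Convergence of a summable sequence of stationary codes.
-/

namespace Stmt15

open MeasureTheory

/-- The shift on `A^ℤ`. -/
def sh {A : Type*} (x : ℤ → A) : ℤ → A := fun n => x (n + 1)

/-- A code of length `2N+1`: a function of the coordinates in `[−N, N]`. -/
structure Code (A : Type*) where
  N : ℕ
  f : (ℤ → A) → A
  isLocal : ∀ x y : ℤ → A, (∀ m : ℤ, |m| ≤ (N : ℤ) → x m = y m) → f x = f y

/-- The stationary code `Λ̄` determined by a code `Λ`: `Λ̄(s)(k) = Λ(s↾[k−N, k+N])`. -/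
def stat {A : Type*} (Λ : Code A) (s : ℤ → A) : ℤ → A :=
  fun k => Λ.f fun m => s (k + m)

/-- The code distance `d(Λ₀, Λ₁) = ν({s : Λ̄₀(s)(0) ≠ Λ̄₁(s)(0)})`. -/
noncomputable def codeDist {A : Type*} [MeasurableSpace A]
    (ν : Measure (ℤ → A)) (Λ₀ Λ₁ : Code A) : ENNReal :=
  ν {s | stat Λ₀ s 0 ≠ stat Λ₁ s 0}

section Aux

open Filter

variable {A : Type*}

/-- shift by `k`. -/
def shz (k : ℤ) (s : ℤ → A) : ℤ → A := fun n => s (n + k)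

lemma measurable_shz [MeasurableSpace A] (k : ℤ) : Measurable (shz (A := A) k) :=
  measurable_pi_lambda _ fun n => measurable_pi_apply _

lemma shz_comp (a b : ℤ) : shz (A := A) a ∘ shz b = shz (a + b) := by
  funext s n
  simp only [Function.comp_apply, shz]
  ring_nf

lemma sh_eq_shz : sh (A := A) = shz 1 := rfl

lemma stat_shz (Λ : Code A) (k : ℤ) (s : ℤ → A) :
    stat Λ (shz k s) 0 = stat Λ s k := by
  simp only [stat, shz]
  exact Λ.isLocal _ _ fun m _ => by ring_nf

lemma stat_sh (Λ : Code A) (k : ℤ) (s : ℤ → A) :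
    stat Λ (sh s) k = stat Λ s (k + 1) := by
  simp only [stat, sh]
  exact Λ.isLocal _ _ fun m _ => by ring_nf

lemma measurable_code_f [Fintype A] [MeasurableSpace A] [MeasurableSingletonClass A]
    (Λ : Code A) : Measurable Λ.f := by
  rcases isEmpty_or_nonempty A with h | h
  · haveI : Subsingleton (ℤ → A) := ⟨fun a _ => (h.false (a 0)).elim⟩
    exact Subsingleton.measurable
  · inhabit A
    classical
    set I := Finset.Icc (-(Λ.N : ℤ)) (Λ.N : ℤ) with hI
    haveI : MeasurableSingletonClass ((i : I) → A) := by
      constructor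
      intro y
      have : ({y} : Set ((i : I) → A)) = ⋂ i, (fun z : (i : I) → A => z i) ⁻¹' {y i} := by
        ext z; simp [funext_iff]
      rw [this]
      exact MeasurableSet.iInter fun i =>
        (measurable_pi_apply i) (measurableSet_singleton _)
    have hg : Measurable
        (fun y : (i : I) → A => Λ.f (fun m => if h : m ∈ I then y ⟨m, h⟩ else default)) :=
      measurable_of_countable _
    have hfe : Λ.f =
        (fun y : (i : I) → A => Λ.f (fun m => if h : m ∈ I then y ⟨m, h⟩ else default)) ∘
          (fun x (i : I) => x (i : ℤ)) := by
      funext x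
      refine (Λ.isLocal _ _ fun m hm => ?_).symm
      have hmI : m ∈ I := by
        rw [hI, Finset.mem_Icc]
        exact abs_le.mp hm
      simp [hmI]
    rw [hfe]
    exact hg.comp (measurable_pi_lambda _ fun i => measurable_pi_apply _)

lemma measurable_stat [Fintype A] [MeasurableSpace A] [MeasurableSingletonClass A]
    (Λ : Code A) : Measurable (stat Λ) :=
  measurable_pi_lambda _ fun k =>
    (measurable_code_f Λ).comp (measurable_pi_lambda _ fun m => measurable_pi_apply _)

end Aux

/-- If `Σ_i d(Λ_i, Λ_{i+1}) < ∞`, then for `ν`-a.e. `s` the sequence `Λ̄_i(s)` is pointwise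
eventually constant, and the a.e. pointwise limit defines a (Borel) shift-invariant map. -/
theorem stationary_codes_converge
    {A : Type*} [Fintype A] [MeasurableSpace A] [MeasurableSingletonClass A]
    (ν : Measure (ℤ → A)) [IsProbabilityMeasure ν]
    (hinv : Measure.map (sh (A := A)) ν = ν)
    (Λ : ℕ → Code A)
    (hsum : (∑' i, codeDist ν (Λ i) (Λ (i + 1))) ≠ ⊤) :
    (∀ᵐ s ∂ν, ∀ k : ℤ, ∃ a : A, ∀ᶠ i in Filter.atTop, stat (Λ i) s k = a) ∧
    ∃ F : (ℤ → A) → (ℤ → A), Measurable F ∧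
      (∀ᵐ s ∂ν, ∀ k : ℤ, ∀ᶠ i in Filter.atTop, stat (Λ i) s k = F s k) ∧
      (∀ᵐ s ∂ν, F (sh s) = sh (F s)) := by
  classical
  open Filter in
  -- invariance under all shifts
  have h1 : Measure.map (shz (A := A) 1) ν = ν := by rw [← sh_eq_shz]; exact hinv
  have hnat : ∀ n : ℕ, Measure.map (shz (A := A) n) ν = ν := by
    intro n
    induction n with
    | zero =>
      have : shz (A := A) 0 = id := by funext s n; simp [shz]
      simp [this]
    | succ n ih =>
      have : shz (A := A) (n + 1) = shz n ∘ shz 1 := by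
        rw [shz_comp]
      rw [show ((n.succ : ℕ) : ℤ) = (n : ℤ) + 1 by push_cast; ring, this,
        ← Measure.map_map (measurable_shz n) (measurable_shz 1), h1, ih]
  have hz : ∀ k : ℤ, Measure.map (shz (A := A) k) ν = ν := by
    intro k
    obtain ⟨n, rfl | rfl⟩ := k.eq_nat_or_neg
    · exact hnat n
    · have : Measure.map (shz (A := A) (-n)) (Measure.map (shz (A := A) n) ν) = ν := by
        rw [Measure.map_map (measurable_shz _) (measurable_shz _), shz_comp]
        have : (-(n : ℤ)) + n = 0 := by ring
        rw [this]
        have : shz (A := A) 0 = id := by funext s n; simp [shz]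
        simp [this]
      rw [hnat n] at this
      exact this
  -- the bad sets
  set D : ℕ → ℤ → Set (ℤ → A) :=
    fun i k => {s | stat (Λ i) s k ≠ stat (Λ (i + 1)) s k} with hD
  have hDk : ∀ i k, D i k = shz k ⁻¹' (D i 0) := by
    intro i k
    ext s
    simp only [hD, Set.mem_setOf_eq, Set.mem_preimage, stat_shz]
  have hDle : ∀ i k, ν (D i k) ≤ codeDist ν (Λ i) (Λ (i + 1)) := by
    intro i k
    rw [hDk]
    calc ν (shz k ⁻¹' D i 0) ≤ (Measure.map (shz (A := A) k) ν) (D i 0) :=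
          Measure.le_map_apply (measurable_shz k).aemeasurable _
      _ = ν (D i 0) := by rw [hz]
      _ = codeDist ν (Λ i) (Λ (i + 1)) := rfl
  have hBC : ∀ k : ℤ, ∀ᵐ s ∂ν, ∀ᶠ i in atTop, s ∉ D i k := by
    intro k
    refine ae_eventually_notMem (ne_top_of_le_ne_top hsum (ENNReal.tsum_le_tsum fun i => hDle i k))
  have hae : ∀ᵐ s ∂ν, ∀ k : ℤ, ∀ᶠ i in atTop, stat (Λ i) s k = stat (Λ (i + 1)) s k := by
    rw [ae_all_iff]
    intro k
    filter_upwards [hBC k] with s hs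
    filter_upwards [hs] with i hi
    simpa [hD] using hi
  have hconst : ∀ᵐ s ∂ν, ∀ k : ℤ, ∃ a : A, ∀ᶠ i in atTop, stat (Λ i) s k = a := by
    filter_upwards [hae] with s hs k
    obtain ⟨n, hn⟩ := (eventually_atTop).mp (hs k)
    refine ⟨stat (Λ n) s k, eventually_atTop.mpr ⟨n, ?_⟩⟩
    intro i hi
    induction i, hi using Nat.le_induction with
    | base => rfl
    | succ m hm ih => rw [← hn m hm, ih]
  -- topology on A
  letI : TopologicalSpace A := ⊥
  haveI : DiscreteTopology A := ⟨rfl⟩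
  haveI : BorelSpace A := by
    constructor
    apply le_antisymm
    · intro t _
      exact MeasurableSpace.measurableSet_generateFrom (isOpen_discrete t)
    · exact MeasurableSpace.generateFrom_le fun t _ => (Set.to_countable t).measurableSet
  have hA0 : Nonempty A := by
    by_contra h
    haveI : IsEmpty A := not_nonempty_iff.mp h
    haveI : IsEmpty (ℤ → A) := ⟨fun s => IsEmpty.false (s 0)⟩
    have h1 : ν Set.univ = 1 := measure_univ
    rw [Set.univ_eq_empty_iff.mpr inferInstance, measure_empty] at h1
    exact one_ne_zero h1.symm
  -- measurable limit
  have hmeas : ∀ n, AEMeasurable (stat (Λ n)) ν := fun n => (measurable_stat (Λ n)).aemeasurable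
  have htend : ∀ᵐ s ∂ν, ∃ l : ℤ → A, Filter.Tendsto (fun n => stat (Λ n) s) atTop (nhds l) := by
    filter_upwards [hconst] with s hs
    refine ⟨fun k => (hs k).choose, tendsto_pi_nhds.mpr fun k => ?_⟩
    exact tendsto_const_nhds.congr' ((hs k).choose_spec.mono fun i hi => hi.symm)
  obtain ⟨F, hFmeas, hFtend⟩ := measurable_limit_of_tendsto_metrizable_ae hmeas htend
  have hFev : ∀ᵐ s ∂ν, ∀ k : ℤ, ∀ᶠ i in atTop, stat (Λ i) s k = F s k := by
    filter_upwards [hconst, hFtend] with s hs ht k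
    obtain ⟨a, ha⟩ := hs k
    have h1 : Filter.Tendsto (fun i => stat (Λ i) s k) atTop (nhds a) :=
      tendsto_const_nhds.congr' (ha.mono fun i hi => hi.symm)
    have h2 : Filter.Tendsto (fun i => stat (Λ i) s k) atTop (nhds (F s k)) :=
      tendsto_pi_nhds.mp ht k
    rwa [tendsto_nhds_unique h1 h2] at ha
  refine ⟨hconst, F, hFmeas, hFev, ?_⟩
  -- shift equivariance
  have hsh : ∀ᵐ s ∂ν, ∀ k : ℤ, ∀ᶠ i in atTop, stat (Λ i) (sh s) k = F (sh s) k := by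
    obtain ⟨T, hTsub, hTmeas, hT0⟩ :=
      exists_measurable_superset_of_null (ae_iff.mp hFev)
    have hpre : ν (sh ⁻¹' T) = 0 := by
      have : ν (sh ⁻¹' T) = (Measure.map (sh (A := A)) ν) T := by
        rw [Measure.map_apply _ hTmeas]
        rw [sh_eq_shz]; exact measurable_shz 1
      rw [this, hinv, hT0]
    rw [ae_iff]
    refine measure_mono_null (fun s hs => ?_) hpre
    exact hTsub hs
  filter_upwards [hFev, hsh] with s h1 h2
  funext k
  obtain ⟨i, hi1, hi2⟩ := ((h2 k).and (h1 (k + 1))).exists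
  rw [← hi1, stat_sh, hi2]
  rfl

end Stmt15
end
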